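/- arXiv:0909.2283 — 7 statements merged into one kernel-verified Lean document; each statement's English description precedes it below -/
import Mathlib

section
/- The space 𝕄 of monotone graphs, equipped with the Hausdorff distance ρ, is a complete and separable (Polish) metric space. -/
/-- A monotone graph: the filled-in graph (in `ℝ₊²`) of a nonnegative nondecreasing function,
viewed as a compact connected subset of the plane containing `(0,0)` which is monotone:
`x < x'` implies `y ≤ y'` for points `(x,y), (x',y')` of the set. -/
def IsMonotoneGraph (Γ : Set (ℝ × ℝ)) : Prop :=
  IsCompact Γ ∧ IsConnected Γ ∧ (0, 0) ∈ Γ ∧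
  (∀ p ∈ Γ, 0 ≤ p.1 ∧ 0 ≤ p.2) ∧
  (∀ p ∈ Γ, ∀ q ∈ Γ, p.1 < q.1 → p.2 ≤ q.2)

/-!
Nonempty compact subsets of `ℝ²` with the Hausdorff metric form a complete, second countable
space, and `𝕄` embeds isometrically in it, so it suffices that `𝕄` is closed there. The Hausdorff
metric induces the Vietoris topology, in which each defining condition of a monotone graph is
closed: containing a point, lying in a closed set, having `K ×ˢ K` inside the closed relation
`x₂ ≤ x₁ ∨ y₁ ≤ y₂`, and being preconnected. For the last one, if `K` splits into two disjoint
compact pieces, these have disjoint open neighbourhoods `U` and `V`, and every `L ⊆ U ∪ V`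
meeting both is again disconnected.
-/

open Set TopologicalSpace

namespace TopologicalSpace.NonemptyCompacts

variable {α : Type*} [TopologicalSpace α]

theorem isClosed_setOf_isPreconnected [T2Space α] :
    IsClosed {K : NonemptyCompacts α | IsPreconnected (K : Set α)} := by
  refine isOpen_compl_iff.1 (isOpen_iff_forall_mem_open.2 fun K hK => ?_)
  obtain ⟨u, v, hu, hv, hKuv, huv, hKu, hKv⟩ : ∃ u v, IsClosed u ∧ IsClosed v ∧
      (K : Set α) ⊆ u ∪ v ∧ Disjoint u v ∧ ¬(K : Set α) ⊆ u ∧ ¬(K : Set α) ⊆ v := by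
    simpa [isPreconnected_iff_subset_of_fully_disjoint_closed K.isCompact.isClosed] using hK
  obtain ⟨U, V, hU, hV, hKU, hKV, hUV⟩ := SeparatedNhds.of_isCompact_isCompact
    (K.isCompact.inter_right hu) (K.isCompact.inter_right hv)
    (huv.mono inter_subset_right inter_subset_right)
  refine ⟨{L | (L : Set α) ⊆ U ∪ V} ∩ {L | ((L : Set α) ∩ U).Nonempty} ∩
    {L | ((L : Set α) ∩ V).Nonempty}, ?_, ?_, ?_⟩
  · rintro L ⟨⟨hLUV, hLU⟩, hLV⟩ hL
    obtain ⟨x, hxL, hxV⟩ := hLV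
    exact disjoint_left.1 hUV (hL.subset_left_of_subset_union hU hV hUV hLUV hLU hxL) hxV
  · exact ((isOpen_subsets_of_isOpen (hU.union hV)).inter
      (isOpen_inter_nonempty_of_isOpen hU)).inter (isOpen_inter_nonempty_of_isOpen hV)
  · obtain ⟨x, hxK, hxv⟩ := not_subset.1 hKv
    obtain ⟨y, hyK, hyu⟩ := not_subset.1 hKu
    refine ⟨⟨fun z hz => ?_, x, hxK, hKU ⟨hxK, (hKuv hxK).resolve_right hxv⟩⟩,
      y, hyK, hKV ⟨hyK, (hKuv hyK).resolve_left hyu⟩⟩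
    rcases hKuv hz with hzu | hzv
    exacts [Or.inl (hKU ⟨hz, hzu⟩), Or.inr (hKV ⟨hz, hzv⟩)]

theorem isClosed_setOf_mem [T1Space α] (x : α) : IsClosed {K : NonemptyCompacts α | x ∈ K} := by
  simpa using isClosed_inter_nonempty_of_isClosed (isClosed_singleton (x := x))

theorem isClosed_setOf_prod_self_subset {F : Set (α × α)} (hF : IsClosed F) :
    IsClosed {K : NonemptyCompacts α | (K : Set α) ×ˢ (K : Set α) ⊆ F} :=
  (isClosed_subsets_of_isClosed hF).preimage
    (by fun_prop : Continuous fun K : NonemptyCompacts α => K ×ˢ K)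

end TopologicalSpace.NonemptyCompacts

open NonemptyCompacts

theorem isClosed_setOf_isMonotoneGraph :
    IsClosed {K : NonemptyCompacts (ℝ × ℝ) | IsMonotoneGraph K} := by
  have hquadrant : IsClosed {p : ℝ × ℝ | 0 ≤ p.1 ∧ 0 ≤ p.2} :=
    (isClosed_le continuous_const continuous_fst).inter
      (isClosed_le continuous_const continuous_snd)
  have hmonotone : IsClosed {pq : (ℝ × ℝ) × (ℝ × ℝ) | pq.1.1 < pq.2.1 → pq.1.2 ≤ pq.2.2} := by
    simp only [imp_iff_not_or, not_lt, ofPred_or]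
    exact (isClosed_le (by fun_prop) (by fun_prop)).union (isClosed_le (by fun_prop) (by fun_prop))
  convert ((isClosed_setOf_isPreconnected.inter (isClosed_setOf_mem (0, 0))).inter
    (isClosed_subsets_of_isClosed hquadrant)).inter
    (isClosed_setOf_prod_self_subset hmonotone) using 1
  ext K
  simp only [mem_inter_iff, mem_ofPred_eq, prod_subset_iff]
  simp only [IsMonotoneGraph, K.isCompact, IsConnected, K.nonempty, subset_def, mem_ofPred_eq,
    SetLike.mem_coe, true_and, and_assoc]

def toNonemptyCompacts (Γ : {Γ : Set (ℝ × ℝ) // IsMonotoneGraph Γ}) : NonemptyCompacts (ℝ × ℝ) :=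
  ⟨⟨Γ.1, Γ.2.1⟩, ⟨(0, 0), Γ.2.2.2.1⟩⟩

theorem toNonemptyCompacts_injective : Function.Injective toNonemptyCompacts :=
  fun _ _ h => Subtype.ext (congrArg SetLike.coe h)

theorem range_toNonemptyCompacts :
    range toNonemptyCompacts = {K : NonemptyCompacts (ℝ × ℝ) | IsMonotoneGraph K} :=
  Subset.antisymm (range_subset_iff.2 fun Γ => Γ.2) fun K hK => ⟨⟨K, hK⟩, rfl⟩

/-- the space `𝕄` of monotone graphs, with the Hausdorff distance,
is a complete separable (Polish) metric space. -/
theorem stmt_2 :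
    ∃ m : MetricSpace {Γ : Set (ℝ × ℝ) // IsMonotoneGraph Γ},
      (∀ Γ₁ Γ₂ : {Γ : Set (ℝ × ℝ) // IsMonotoneGraph Γ},
        @dist _ m.toDist Γ₁ Γ₂ = Metric.hausdorffDist (Γ₁ : Set (ℝ × ℝ)) (Γ₂ : Set (ℝ × ℝ))) ∧
      @CompleteSpace _ m.toUniformSpace ∧
      @TopologicalSpace.SeparableSpace _ m.toUniformSpace.toTopologicalSpace := by
  let m : MetricSpace {Γ : Set (ℝ × ℝ) // IsMonotoneGraph Γ} :=
    .induced toNonemptyCompacts toNonemptyCompacts_injective inferInstance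
  have hiso : Isometry toNonemptyCompacts := Isometry.of_dist_eq fun _ _ => rfl
  refine ⟨m, fun _ _ => Metric.NonemptyCompacts.dist_eq, ?_, ?_⟩
  · rw [completeSpace_iff_isComplete_range hiso.isUniformInducing, range_toNonemptyCompacts]
    exact isClosed_setOf_isMonotoneGraph.isComplete
  · have := hiso.isEmbedding.secondCountableTopology
    infer_instance
end

section
/- Every element of 𝕄 (a monotone graph in ℝ₊², i.e., the filled-in graph of a nondecreasing function f : [0,z] → ℝ₊), when viewed in the rotated coordinate system (s, g) with s = x + y and g = y − x for (x,y) on the graph, is the graph of a 1-Lipschitz function g : [0, z + f(z)] → ℝ. Conversely, the Hausdorff metric ρ on 𝕄 is equivalent to the metric ρ'(Γ₁, Γ₂) = |s₁ − s₂| + sup_{0 ≤ s ≤ s₁∧s₂} |g₁(s) − g₂(s)|, where g_i is the 1-Lipschitz representation of Γ_i over [0, s_i]. -/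
/-!
A monotone graph is a chain for the coordinatewise order, so `s = x + y` is injective on it, and by
connectedness it takes every value in `[0, rotLen Γ]`; along the chain both coordinates increase,
so `g = y - x` moves by at most the change of `s`. For the sup-distance on `ℝ × ℝ` one has
`dist p q = (|Δs| + |Δg|) / 2`. Hence `ρ ≤ ρ'`, by joining each point to the point of the other
graph with the nearest admissible parameter, and `ρ' ≤ 4ρ`, by comparing each point with a nearest
point of the other graph, which exists by compactness.
-/

open Set Filter

/-- Total rotated length `s₁ = z + f(z)` of a monotone graph: the sup of `x + y` over the graph. -/
noncomputable def rotLen (Γ : Set (ℝ × ℝ)) : ℝ := sSup ((fun p : ℝ × ℝ => p.1 + p.2) '' Γ)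

/-- The rotated-coordinate representation `g(s) = y − x` where `(x,y)` is the unique point of
`Γ` on the line `x + y = s`. -/
noncomputable def rotFun (Γ : Set (ℝ × ℝ)) (s : ℝ) : ℝ :=
  sSup ((fun p : ℝ × ℝ => p.2 - p.1) '' (Γ ∩ {p | p.1 + p.2 = s}))

/-- The metric `ρ'` built from the rotated 1-Lipschitz representations. -/
noncomputable def rho' (Γ₁ Γ₂ : Set (ℝ × ℝ)) : ℝ :=
  |rotLen Γ₁ - rotLen Γ₂| +
    sSup ((fun s => |rotFun Γ₁ s - rotFun Γ₂ s|) '' Icc 0 (min (rotLen Γ₁) (rotLen Γ₂)))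

theorem max_abs_abs_eq {α : Type*} [Field α] [LinearOrder α] [IsStrictOrderedRing α]
    (a b : α) : max |a| |b| = (|a + b| + |b - a|) / 2 := by
  rcases le_total 0 a with ha | ha <;> rcases le_total 0 b with hb | hb <;>
  rcases le_total 0 (a + b) with h | h <;> rcases le_total 0 (b - a) with h' | h' <;>
  simp only [abs_of_nonneg, abs_of_nonpos, ha, hb, h, h', max_def] <;> split_ifs <;> linarith

theorem dist_eq_rotated (p q : ℝ × ℝ) :
    dist p q = (dist (p.1 + p.2) (q.1 + q.2) + dist (p.2 - p.1) (q.2 - q.1)) / 2 := by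
  rw [Prod.dist_eq, Real.dist_eq, Real.dist_eq, max_abs_abs_eq]
  congr 2 <;> rw [Real.dist_eq] <;> ring_nf

theorem IsCompact.exists_dist_le_hausdorffDist {α : Type*} [PseudoMetricSpace α] {s t : Set α}
    {x : α} (hs : Bornology.IsBounded s) (ht : IsCompact t) (hx : x ∈ s) (ht₀ : t.Nonempty) :
    ∃ y ∈ t, dist x y ≤ Metric.hausdorffDist s t := by
  obtain ⟨y, hy, hxy⟩ := ht.exists_infDist_eq_dist ht₀ x
  refine ⟨y, hy, hxy ▸ Metric.infDist_le_hausdorffDist_of_mem hx ?_⟩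
  exact Metric.hausdorffEDist_ne_top_of_nonempty_of_bounded ⟨x, hx⟩ ht₀ hs ht.isBounded

namespace IsMonotoneGraph

variable {Γ : Set (ℝ × ℝ)} {p q : ℝ × ℝ} {s : ℝ}

theorem sum_le_rotLen (hΓ : IsMonotoneGraph Γ) (hp : p ∈ Γ) : p.1 + p.2 ≤ rotLen Γ :=
  le_csSup ((hΓ.1.image (by fun_prop)).bddAbove) (mem_image_of_mem _ hp)

theorem sum_mem_Icc (hΓ : IsMonotoneGraph Γ) (hp : p ∈ Γ) : p.1 + p.2 ∈ Icc 0 (rotLen Γ) :=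
  ⟨add_nonneg (hΓ.2.2.2.1 p hp).1 (hΓ.2.2.2.1 p hp).2, hΓ.sum_le_rotLen hp⟩

theorem rotLen_nonneg (hΓ : IsMonotoneGraph Γ) : 0 ≤ rotLen Γ := by
  simpa using hΓ.sum_le_rotLen hΓ.2.2.1

theorem le_of_sum_le (hΓ : IsMonotoneGraph Γ) (hp : p ∈ Γ) (hq : q ∈ Γ)
    (h : p.1 + p.2 ≤ q.1 + q.2) : p ≤ q := by
  have h₁ : p.1 ≤ q.1 := not_lt.1 fun hlt ↦ by linarith [hΓ.2.2.2.2 q hq p hp hlt]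
  refine ⟨h₁, ?_⟩
  rcases h₁.eq_or_lt with h₁ | h₁
  · linarith
  · exact hΓ.2.2.2.2 p hp q hq h₁

theorem eq_of_sum_eq (hΓ : IsMonotoneGraph Γ) (hp : p ∈ Γ) (hq : q ∈ Γ)
    (h : p.1 + p.2 = q.1 + q.2) : p = q :=
  le_antisymm (hΓ.le_of_sum_le hp hq h.le) (hΓ.le_of_sum_le hq hp h.ge)

theorem exists_mem_sum_eq (hΓ : IsMonotoneGraph Γ) (hs : s ∈ Icc 0 (rotLen Γ)) :
    ∃ p ∈ Γ, p.1 + p.2 = s := by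
  have hsum : Continuous fun p : ℝ × ℝ ↦ p.1 + p.2 := by fun_prop
  obtain ⟨r, hr, hr_eq⟩ := (hΓ.1.image hsum).sSup_mem ⟨_, mem_image_of_mem _ hΓ.2.2.1⟩
  refine hΓ.2.1.isPreconnected.intermediate_value hΓ.2.2.1 hr hsum.continuousOn ?_
  simpa [hr_eq, rotLen] using hs

theorem rotFun_sum (hΓ : IsMonotoneGraph Γ) (hp : p ∈ Γ) :
    rotFun Γ (p.1 + p.2) = p.2 - p.1 := by
  have hline : Γ ∩ {q | q.1 + q.2 = p.1 + p.2} = {p} :=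
    eq_singleton_iff_unique_mem.2 ⟨⟨hp, rfl⟩, fun q hq ↦ hΓ.eq_of_sum_eq hq.1 hp hq.2⟩
  rw [rotFun, hline, image_singleton, csSup_singleton]

theorem dist_diff_le_dist_sum (hΓ : IsMonotoneGraph Γ) (hp : p ∈ Γ) (hq : q ∈ Γ) :
    dist (p.2 - p.1) (q.2 - q.1) ≤ dist (p.1 + p.2) (q.1 + q.2) := by
  wlog h : p.1 + p.2 ≤ q.1 + q.2 generalizing p q
  · rw [dist_comm, dist_comm (p.1 + p.2)]
    exact this hq hp (by linarith)
  obtain ⟨h₁, h₂⟩ := hΓ.le_of_sum_le hp hq h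
  rw [Real.dist_eq, Real.dist_eq, abs_of_nonpos (a := p.1 + p.2 - (q.1 + q.2)) (by linarith),
    abs_le]
  constructor <;> linarith

theorem dist_le_dist_sum (hΓ : IsMonotoneGraph Γ) (hp : p ∈ Γ) (hq : q ∈ Γ) :
    dist p q ≤ dist (p.1 + p.2) (q.1 + q.2) := by
  linarith [dist_eq_rotated p q, hΓ.dist_diff_le_dist_sum hp hq]

theorem lipschitzOnWith_rotFun (hΓ : IsMonotoneGraph Γ) :
    LipschitzOnWith 1 (rotFun Γ) (Icc 0 (rotLen Γ)) := by
  refine LipschitzOnWith.of_dist_le_mul fun s hs t ht ↦ ?_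
  obtain ⟨p, hp, rfl⟩ := hΓ.exists_mem_sum_eq hs
  obtain ⟨q, hq, rfl⟩ := hΓ.exists_mem_sum_eq ht
  rw [hΓ.rotFun_sum hp, hΓ.rotFun_sum hq, NNReal.coe_one, one_mul]
  exact hΓ.dist_diff_le_dist_sum hp hq

theorem eq_image_rotFun (hΓ : IsMonotoneGraph Γ) :
    Γ = (fun s ↦ ((s - rotFun Γ s) / 2, (s + rotFun Γ s) / 2)) '' Icc 0 (rotLen Γ) := by
  ext p
  constructor
  · intro hp
    refine ⟨p.1 + p.2, hΓ.sum_mem_Icc hp, ?_⟩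
    dsimp only
    rw [hΓ.rotFun_sum hp]
    ext <;> ring
  · rintro ⟨s, hs, rfl⟩
    obtain ⟨q, hq, rfl⟩ := hΓ.exists_mem_sum_eq hs
    convert hq using 1
    dsimp only
    rw [hΓ.rotFun_sum hq]
    ext <;> ring

end IsMonotoneGraph

noncomputable def rotFunSupDist (Γ₁ Γ₂ : Set (ℝ × ℝ)) : ℝ :=
  sSup ((fun s => |rotFun Γ₁ s - rotFun Γ₂ s|) '' Icc 0 (min (rotLen Γ₁) (rotLen Γ₂)))

theorem rho'_eq (Γ₁ Γ₂ : Set (ℝ × ℝ)) :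
    rho' Γ₁ Γ₂ = |rotLen Γ₁ - rotLen Γ₂| + rotFunSupDist Γ₁ Γ₂ :=
  rfl

theorem rotFunSupDist_comm (Γ₁ Γ₂ : Set (ℝ × ℝ)) :
    rotFunSupDist Γ₁ Γ₂ = rotFunSupDist Γ₂ Γ₁ := by
  unfold rotFunSupDist
  rw [min_comm]
  simp_rw [abs_sub_comm (rotFun Γ₁ _)]

theorem rho'_comm (Γ₁ Γ₂ : Set (ℝ × ℝ)) : rho' Γ₁ Γ₂ = rho' Γ₂ Γ₁ := by
  rw [rho'_eq, rho'_eq, abs_sub_comm, rotFunSupDist_comm]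

namespace IsMonotoneGraph

variable {A B : Set (ℝ × ℝ)} {p : ℝ × ℝ} {s : ℝ}

theorem abs_rotFun_sub_le_rotFunSupDist (hA : IsMonotoneGraph A) (hB : IsMonotoneGraph B)
    (hs : s ∈ Icc 0 (min (rotLen A) (rotLen B))) :
    |rotFun A s - rotFun B s| ≤ rotFunSupDist A B := by
  refine le_csSup (isCompact_Icc.bddAbove_image ?_) (mem_image_of_mem _ hs)
  have hA' := hA.lipschitzOnWith_rotFun.continuousOn.mono
    (Icc_subset_Icc_right (min_le_left _ (rotLen B)))
  have hB' := hB.lipschitzOnWith_rotFun.continuousOn.mono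
    (Icc_subset_Icc_right (min_le_right (rotLen A) _))
  exact (hA'.sub hB').abs

theorem rotFunSupDist_nonneg (hA : IsMonotoneGraph A) (hB : IsMonotoneGraph B) :
    0 ≤ rotFunSupDist A B :=
  (abs_nonneg _).trans <| hA.abs_rotFun_sub_le_rotFunSupDist hB
    ⟨le_rfl, le_min hA.rotLen_nonneg hB.rotLen_nonneg⟩

theorem rotFunSupDist_le (hA : IsMonotoneGraph A) (hB : IsMonotoneGraph B) {c : ℝ}
    (h : ∀ s ∈ Icc 0 (min (rotLen A) (rotLen B)), |rotFun A s - rotFun B s| ≤ c) :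
    rotFunSupDist A B ≤ c :=
  csSup_le ((nonempty_Icc.2 (le_min hA.rotLen_nonneg hB.rotLen_nonneg)).image _)
    (forall_mem_image.2 h)

theorem rho'_nonneg (hA : IsMonotoneGraph A) (hB : IsMonotoneGraph B) : 0 ≤ rho' A B :=
  add_nonneg (abs_nonneg _) (hA.rotFunSupDist_nonneg hB)

theorem exists_dist_le_rho' (hA : IsMonotoneGraph A) (hB : IsMonotoneGraph B) (hp : p ∈ A) :
    ∃ q ∈ B, dist p q ≤ rho' A B := by
  set s := p.1 + p.2
  have hs : s ∈ Icc 0 (rotLen A) := hA.sum_mem_Icc hp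
  set s' := min s (rotLen B)
  have hs'A : s' ∈ Icc 0 (rotLen A) := ⟨le_min hs.1 hB.rotLen_nonneg, (min_le_left _ _).trans hs.2⟩
  have hs'B : s' ∈ Icc 0 (rotLen B) := ⟨hs'A.1, min_le_right _ _⟩
  obtain ⟨p', hp', hp's⟩ := hA.exists_mem_sum_eq hs'A
  obtain ⟨q, hq, hqs⟩ := hB.exists_mem_sum_eq hs'B
  refine ⟨q, hq, ?_⟩
  have hss' : dist s s' ≤ |rotLen A - rotLen B| := by
    rcases le_total s (rotLen B) with h | h
    · simp [s', min_eq_left h]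
    · rw [show s' = rotLen B from min_eq_right h, Real.dist_eq, abs_of_nonneg (by linarith)]
      exact (sub_le_sub_right hs.2 _).trans (le_abs_self _)
  have hp'q : dist p' q ≤ rotFunSupDist A B := by
    have hg := hA.abs_rotFun_sub_le_rotFunSupDist hB (s := s') ⟨hs'A.1, le_min hs'A.2 hs'B.2⟩
    rw [← hp's, hA.rotFun_sum hp', hp's, ← hqs, hB.rotFun_sum hq] at hg
    rw [dist_eq_rotated, hp's, hqs, dist_self, zero_add, Real.dist_eq]
    linarith [abs_nonneg (p'.2 - p'.1 - (q.2 - q.1))]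
  calc dist p q ≤ dist p p' + dist p' q := dist_triangle _ _ _
    _ ≤ dist s s' + rotFunSupDist A B := by
        gcongr
        simpa only [hp's] using hA.dist_le_dist_sum hp hp'
    _ ≤ rho' A B := by rw [rho'_eq]; gcongr

theorem hausdorffDist_le_rho' (hA : IsMonotoneGraph A) (hB : IsMonotoneGraph B) :
    Metric.hausdorffDist A B ≤ rho' A B :=
  Metric.hausdorffDist_le_of_mem_dist (hA.rho'_nonneg hB) (fun _ hp ↦ hA.exists_dist_le_rho' hB hp)
    fun _ hq ↦ rho'_comm A B ▸ hB.exists_dist_le_rho' hA hq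

theorem exists_dist_le_hausdorffDist (hA : IsMonotoneGraph A) (hB : IsMonotoneGraph B)
    (hp : p ∈ A) : ∃ q ∈ B, dist p q ≤ Metric.hausdorffDist A B :=
  hB.1.exists_dist_le_hausdorffDist hA.1.isBounded hp ⟨_, hB.2.2.1⟩

theorem rotLen_le_add_two_mul_hausdorffDist (hA : IsMonotoneGraph A) (hB : IsMonotoneGraph B) :
    rotLen A ≤ rotLen B + 2 * Metric.hausdorffDist A B := by
  obtain ⟨p, hp, hps⟩ := hA.exists_mem_sum_eq (right_mem_Icc.2 hA.rotLen_nonneg)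
  obtain ⟨q, hq, hpq⟩ := hA.exists_dist_le_hausdorffDist hB hp
  have hsum : p.1 + p.2 - (q.1 + q.2) ≤ dist (p.1 + p.2) (q.1 + q.2) := le_abs_self _
  linarith [dist_eq_rotated p q, dist_nonneg (x := p.2 - p.1) (y := q.2 - q.1),
    hB.sum_le_rotLen hq]

theorem abs_rotLen_sub_le_two_mul_hausdorffDist (hA : IsMonotoneGraph A) (hB : IsMonotoneGraph B) :
    |rotLen A - rotLen B| ≤ 2 * Metric.hausdorffDist A B := by
  have hBA := hB.rotLen_le_add_two_mul_hausdorffDist hA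
  rw [Metric.hausdorffDist_comm] at hBA
  rw [abs_sub_le_iff]
  constructor <;> linarith [hA.rotLen_le_add_two_mul_hausdorffDist hB]

theorem rotFunSupDist_le_two_mul_hausdorffDist (hA : IsMonotoneGraph A) (hB : IsMonotoneGraph B) :
    rotFunSupDist A B ≤ 2 * Metric.hausdorffDist A B := by
  refine hA.rotFunSupDist_le hB fun s hs ↦ ?_
  obtain ⟨p, hp, rfl⟩ := hA.exists_mem_sum_eq ⟨hs.1, hs.2.trans (min_le_left _ _)⟩
  obtain ⟨r, hr, hrs⟩ := hB.exists_mem_sum_eq ⟨hs.1, hs.2.trans (min_le_right _ _)⟩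
  obtain ⟨q, hq, hpq⟩ := hA.exists_dist_le_hausdorffDist hB hp
  rw [hA.rotFun_sum hp, ← hrs, hB.rotFun_sum hr, ← Real.dist_eq]
  have hqr : dist (q.2 - q.1) (r.2 - r.1) ≤ dist (p.1 + p.2) (q.1 + q.2) :=
    (hB.dist_diff_le_dist_sum hq hr).trans_eq (by rw [hrs, dist_comm])
  calc dist (p.2 - p.1) (r.2 - r.1) ≤ dist (p.2 - p.1) (q.2 - q.1) + dist (q.2 - q.1) (r.2 - r.1) :=
        dist_triangle _ _ _
    _ ≤ 2 * dist p q := by linarith [dist_eq_rotated p q]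
    _ ≤ 2 * Metric.hausdorffDist A B := by gcongr

theorem rho'_le_four_mul_hausdorffDist (hA : IsMonotoneGraph A) (hB : IsMonotoneGraph B) :
    rho' A B ≤ 4 * Metric.hausdorffDist A B := by
  linarith [rho'_eq A B, hA.abs_rotLen_sub_le_two_mul_hausdorffDist hB,
    hA.rotFunSupDist_le_two_mul_hausdorffDist hB]

end IsMonotoneGraph

/-- every monotone graph, in the rotated coordinates `s = x + y`, `g = y − x`,
is the graph of a 1-Lipschitz function on `[0, z + f(z)]`; and the Hausdorff metric `ρ` is
equivalent to the metric `ρ'` (they have the same convergent sequences). -/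
theorem stmt_3 :
    (∀ Γ : Set (ℝ × ℝ), IsMonotoneGraph Γ →
      LipschitzOnWith 1 (rotFun Γ) (Icc 0 (rotLen Γ)) ∧
      Γ = (fun s => ((s - rotFun Γ s) / 2, (s + rotFun Γ s) / 2)) '' Icc 0 (rotLen Γ)) ∧
    (∀ (Γ : ℕ → Set (ℝ × ℝ)) (L : Set (ℝ × ℝ)),
      (∀ n, IsMonotoneGraph (Γ n)) → IsMonotoneGraph L →
      (Tendsto (fun n => Metric.hausdorffDist (Γ n) L) atTop (nhds 0) ↔
        Tendsto (fun n => rho' (Γ n) L) atTop (nhds 0))) := by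
  refine ⟨fun Γ hΓ ↦ ⟨hΓ.lipschitzOnWith_rotFun, hΓ.eq_image_rotFun⟩, fun Γ L hΓ hL ↦ ⟨?_, ?_⟩⟩
  · intro h
    refine squeeze_zero (fun n ↦ (hΓ n).rho'_nonneg hL)
      (fun n ↦ (hΓ n).rho'_le_four_mul_hausdorffDist hL) ?_
    simpa using h.const_mul 4
  · intro h
    exact squeeze_zero (fun _ ↦ Metric.hausdorffDist_nonneg)
      (fun n ↦ (hΓ n).hausdorffDist_le_rho' hL) h
end

section
/- A set H of monotone graphs is precompact in (𝕄, ρ) if and only if the set {(z₀(Γ), z₁(Γ)) : Γ ∈ H} is bounded in ℝ², where z₀(Γ) = sup{x : (x,y) ∈ Γ} and z₁(Γ) = sup{y : (x,y) ∈ Γ}. -/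
open Set Filter

/-- Horizontal extent of a monotone graph. -/
noncomputable def z0 (Γ : Set (ℝ × ℝ)) : ℝ := sSup (Prod.fst '' Γ)

/-- Vertical extent of a monotone graph. -/
noncomputable def z1 (Γ : Set (ℝ × ℝ)) : ℝ := sSup (Prod.snd '' Γ)

/-!
For a monotone graph `Γ` every point lies in `[0, z₀] × [0, z₁]` and both extents are attained,
so bounded extents amount to all graphs of `H` lying in one ball. In that case Blaschke's
selection theorem (total boundedness of the nonempty compact subsets of a bounded set) yields a
Hausdorff-convergent subsequence, and every defining property of a monotone graph passes to
Hausdorff limits. Conversely, a Hausdorff-convergent subsequence eventually stays in the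
1-thickening of its bounded limit, so graphs escaping to infinity admit none.
-/

open Metric Topology

section HausdorffLimit

variable {α : Type*} [PseudoMetricSpace α] {s : ℕ → Set α} {L : Set α}

theorem eventually_subset_thickening_of_tendsto_hausdorffDist
    (hfin : ∀ n, hausdorffEDist (s n) L ≠ ⊤)
    (hconv : Tendsto (fun n => hausdorffDist (s n) L) atTop (𝓝 0)) {δ : ℝ} (hδ : 0 < δ) :
    ∀ᶠ n in atTop, s n ⊆ thickening δ L := by
  filter_upwards [hconv.eventually (gt_mem_nhds hδ)] with n hn x hx
  exact mem_thickening_iff.2 (exists_dist_lt_of_hausdorffDist_lt hx hn (hfin n))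

theorem eventually_subset_thickening_of_tendsto_hausdorffDist'
    (hfin : ∀ n, hausdorffEDist (s n) L ≠ ⊤)
    (hconv : Tendsto (fun n => hausdorffDist (s n) L) atTop (𝓝 0)) {δ : ℝ} (hδ : 0 < δ) :
    ∀ᶠ n in atTop, L ⊆ thickening δ (s n) := by
  filter_upwards [hconv.eventually (gt_mem_nhds hδ)] with n hn x hx
  obtain ⟨y, hy, hxy⟩ := exists_dist_lt_of_hausdorffDist_lt' hx hn (hfin n)
  exact mem_thickening_iff.2 ⟨y, hy, by rwa [dist_comm]⟩

theorem exists_tendsto_of_mem_of_tendsto_hausdorffDist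
    (hfin : ∀ n, hausdorffEDist (s n) L ≠ ⊤)
    (hconv : Tendsto (fun n => hausdorffDist (s n) L) atTop (𝓝 0)) {p : α} (hp : p ∈ L) :
    ∃ x : ℕ → α, (∀ n, x n ∈ s n) ∧ Tendsto x atTop (𝓝 p) := by
  have hlt : ∀ n : ℕ, hausdorffDist (s n) L < hausdorffDist (s n) L + 1 / (n + 1) :=
    fun n => lt_add_of_pos_right _ Nat.one_div_pos_of_nat
  choose x hx hdist using fun n => exists_dist_lt_of_hausdorffDist_lt' hp (hlt n) (hfin n)
  refine ⟨x, hx, tendsto_iff_dist_tendsto_zero.2 ?_⟩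
  have hbound : Tendsto (fun n : ℕ => hausdorffDist (s n) L + 1 / (n + 1)) atTop (𝓝 0) := by
    simpa using hconv.add tendsto_one_div_add_atTop_nhds_zero_nat
  exact squeeze_zero (fun _ => dist_nonneg) (fun n => (hdist n).le) hbound

theorem mem_closure_of_forall_mem_of_tendsto_hausdorffDist
    (hfin : ∀ n, hausdorffEDist (s n) L ≠ ⊤)
    (hconv : Tendsto (fun n => hausdorffDist (s n) L) atTop (𝓝 0)) {p : α}
    (hp : ∀ n, p ∈ s n) : p ∈ closure L := by
  refine Metric.mem_closure_iff.2 fun ε hε => ?_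
  obtain ⟨n, hn⟩ := (eventually_subset_thickening_of_tendsto_hausdorffDist hfin hconv hε).exists
  exact mem_thickening_iff.1 (hn (hp n))

end HausdorffLimit

/-- Two separated parts of the limit would split every close enough approximant. -/
theorem isPreconnected_of_tendsto_hausdorffDist {α : Type*} [MetricSpace α] {s : ℕ → Set α}
    {L : Set α} (hL : IsCompact L)
    (hs : ∀ n, IsPreconnected (s n)) (hfin : ∀ n, hausdorffEDist (s n) L ≠ ⊤)
    (hconv : Tendsto (fun n => hausdorffDist (s n) L) atTop (𝓝 0)) :
    IsPreconnected L := by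
  rw [isPreconnected_iff_subset_of_fully_disjoint_closed hL.isClosed]
  intro A B hA hB hcover hdisj
  by_contra! hsplit
  obtain ⟨⟨b, hbL, hbA⟩, ⟨a, haL, haB⟩⟩ := And.imp not_subset.1 not_subset.1 hsplit
  obtain ⟨δ, hδ, hsep⟩ := (hdisj.mono inter_subset_right inter_subset_right).exists_thickenings
    (hL.inter_right hA) (hL.isClosed.inter hB)
  obtain ⟨n, hsL, hLs⟩ := ((eventually_subset_thickening_of_tendsto_hausdorffDist hfin hconv hδ).and
    (eventually_subset_thickening_of_tendsto_hausdorffDist' hfin hconv hδ)).exists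
  have hLAB : L ⊆ (L ∩ A) ∪ (L ∩ B) := fun z hz => (hcover hz).imp (⟨hz, ·⟩) (⟨hz, ·⟩)
  have hmeets : ∀ {C : Set α}, ∀ c ∈ L ∩ C, (s n ∩ thickening δ (L ∩ C)).Nonempty := by
    intro C c hc
    obtain ⟨y, hy, hcy⟩ := mem_thickening_iff.1 (hLs hc.1)
    exact ⟨y, hy, mem_thickening_iff.2 ⟨c, hc, by rwa [dist_comm]⟩⟩
  obtain ⟨z, -, hzA, hzB⟩ := hs n _ _ isOpen_thickening isOpen_thickening
    (hsL.trans ((thickening_subset_of_subset δ hLAB).trans (thickening_union δ _ _).subset))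
    (hmeets a ⟨haL, (hcover haL).resolve_right haB⟩)
    (hmeets b ⟨hbL, (hcover hbL).resolve_left hbA⟩)
  exact hsep.ne_of_mem hzA hzB rfl

theorem isBounded_sUnion_of_forall_exists_tendsto_hausdorffDist {α : Type*}
    [PseudoMetricSpace α] {H : Set (Set α)} (hH : ∀ s ∈ H, s.Nonempty ∧ Bornology.IsBounded s)
    (hseq : ∀ s : ℕ → Set α, (∀ n, s n ∈ H) → ∃ φ : ℕ → ℕ, StrictMono φ ∧ ∃ L : Set α,
      L.Nonempty ∧ Bornology.IsBounded L ∧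
        Tendsto (fun n => hausdorffDist (s (φ n)) L) atTop (𝓝 0)) :
    Bornology.IsBounded (⋃₀ H) := by
  rcases (⋃₀ H).eq_empty_or_nonempty with hempty | ⟨c, -⟩
  · simp [hempty]
  by_contra hunb
  have hfar : ∀ n : ℕ, ∃ s ∈ H, ∃ x ∈ s, (n : ℝ) < dist x c := by
    intro n
    obtain ⟨x, ⟨s, hs, hxs⟩, hx⟩ :=
      not_subset.1 fun h => hunb ((isBounded_iff_subset_closedBall c).2 ⟨n, h⟩)
    exact ⟨s, hs, x, hxs, not_le.1 hx⟩
  choose s hsH x hxs hx using hfar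
  obtain ⟨φ, hφ, L, hLne, hLb, hconv⟩ := hseq s hsH
  have hfin : ∀ n, hausdorffEDist (s (φ n)) L ≠ ⊤ := fun n =>
    hausdorffEDist_ne_top_of_nonempty_of_bounded (hH _ (hsH _)).1 hLne (hH _ (hsH _)).2 hLb
  obtain ⟨R, hR⟩ := (isBounded_iff_subset_closedBall c).1 (hLb.thickening (δ := 1))
  have hφ_large : ∀ᶠ n in atTop, R < (φ n : ℝ) :=
    (tendsto_natCast_atTop_atTop.comp hφ.tendsto_atTop).eventually_gt_atTop R
  obtain ⟨n, hsub, hn⟩ := ((eventually_subset_thickening_of_tendsto_hausdorffDist hfin hconv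
    one_pos).and hφ_large).exists
  have hxR : dist (x (φ n)) c ≤ R := mem_closedBall.1 (hR (hsub (hxs (φ n))))
  linarith [hx (φ n)]

theorem exists_subseq_tendsto_hausdorffDist {α : Type*} [MetricSpace α] [CompleteSpace α]
    {t : Set α} (ht : TotallyBounded t) {s : ℕ → Set α} (hs : ∀ n, IsCompact (s n))
    (hne : ∀ n, (s n).Nonempty) (hst : ∀ n, s n ⊆ t) :
    ∃ φ : ℕ → ℕ, StrictMono φ ∧ ∃ L : Set α, IsCompact L ∧ L.Nonempty ∧
      Tendsto (fun n => hausdorffDist (s (φ n)) L) atTop (𝓝 0) := by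
  let S : ℕ → TopologicalSpace.NonemptyCompacts α := fun n => ⟨⟨s n, hs n⟩, hne n⟩
  have hK := (TopologicalSpace.NonemptyCompacts.totallyBounded_subsets_of_totallyBounded
    ht).closure.isCompact_of_isClosed isClosed_closure
  obtain ⟨L, -, φ, hφ, hlim⟩ := hK.tendsto_subseq fun n => subset_closure (show S n ∈ _ from hst n)
  exact ⟨φ, hφ, L, L.isCompact, L.nonempty, tendsto_iff_dist_tendsto_zero.1 hlim⟩

namespace IsMonotoneGraph

variable {Γ : Set (ℝ × ℝ)} (hΓ : IsMonotoneGraph Γ)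
include hΓ

theorem fst_le_z0 {p : ℝ × ℝ} (hp : p ∈ Γ) : p.1 ≤ z0 Γ :=
  le_csSup (hΓ.1.image continuous_fst).bddAbove ⟨p, hp, rfl⟩

theorem snd_le_z1 {p : ℝ × ℝ} (hp : p ∈ Γ) : p.2 ≤ z1 Γ :=
  le_csSup (hΓ.1.image continuous_snd).bddAbove ⟨p, hp, rfl⟩

theorem z0_mem : z0 Γ ∈ Prod.fst '' Γ :=
  (hΓ.1.image continuous_fst).sSup_mem (hΓ.2.1.nonempty.image _)

theorem z1_mem : z1 Γ ∈ Prod.snd '' Γ :=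
  (hΓ.1.image continuous_snd).sSup_mem (hΓ.2.1.nonempty.image _)

theorem subset_closedBall_iff {r : ℝ} :
    Γ ⊆ closedBall 0 r ↔ ‖((z0 Γ, z1 Γ) : ℝ × ℝ)‖ ≤ r := by
  simp only [subset_def, mem_closedBall_zero_iff, norm_prod_le_iff]
  constructor
  · intro h
    obtain ⟨p, hp, hp0⟩ := hΓ.z0_mem
    obtain ⟨q, hq, hq1⟩ := hΓ.z1_mem
    exact ⟨hp0 ▸ (h p hp).1, hq1 ▸ (h q hq).2⟩
  · intro ⟨h0, h1⟩ p hp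
    obtain ⟨hp1, hp2⟩ := hΓ.2.2.2.1 p hp
    rw [Real.norm_of_nonneg hp1, Real.norm_of_nonneg hp2]
    exact ⟨(hΓ.fst_le_z0 hp).trans ((le_abs_self _).trans h0),
      (hΓ.snd_le_z1 hp).trans ((le_abs_self _).trans h1)⟩

end IsMonotoneGraph

theorem isBounded_extents_iff_isBounded_sUnion {H : Set (Set (ℝ × ℝ))} (hH : ∀ Γ ∈ H, IsMonotoneGraph Γ) :
    Bornology.IsBounded {q : ℝ × ℝ | ∃ Γ ∈ H, q = (z0 Γ, z1 Γ)} ↔ Bornology.IsBounded (⋃₀ H) := by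
  rw [isBounded_iff_forall_norm_le, isBounded_iff_subset_closedBall 0]
  refine exists_congr fun r => ⟨fun h => sUnion_subset fun Γ hΓ =>
    (hH Γ hΓ).subset_closedBall_iff.2 (h _ ⟨Γ, hΓ, rfl⟩), ?_⟩
  rintro h _ ⟨Γ, hΓ, rfl⟩
  exact (hH Γ hΓ).subset_closedBall_iff.1 ((subset_sUnion_of_mem hΓ).trans h)

theorem IsMonotoneGraph.of_tendsto_hausdorffDist {s : ℕ → Set (ℝ × ℝ)} {L : Set (ℝ × ℝ)}
    (hs : ∀ n, IsMonotoneGraph (s n)) (hL : IsCompact L) (hLne : L.Nonempty)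
    (hconv : Tendsto (fun n => hausdorffDist (s n) L) atTop (𝓝 0)) :
    IsMonotoneGraph L := by
  have hfin : ∀ n, hausdorffEDist (s n) L ≠ ⊤ := fun n =>
    hausdorffEDist_ne_top_of_nonempty_of_bounded (hs n).2.1.nonempty hLne
      (hs n).1.isBounded hL.isBounded
  have hconn : IsPreconnected L :=
    isPreconnected_of_tendsto_hausdorffDist hL (fun n => (hs n).2.1.2) hfin hconv
  have hzero : ((0, 0) : ℝ × ℝ) ∈ L := hL.isClosed.closure_subset
    (mem_closure_of_forall_mem_of_tendsto_hausdorffDist hfin hconv fun n => (hs n).2.2.1)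
  have happrox {p} (hp : p ∈ L) := exists_tendsto_of_mem_of_tendsto_hausdorffDist hfin hconv hp
  refine ⟨hL, ⟨hLne, hconn⟩, hzero, fun p hp => ?_, fun p hp q hq hpq => ?_⟩
  · obtain ⟨x, hx, hxp⟩ := happrox hp
    exact ⟨ge_of_tendsto' hxp.fst_nhds fun n => ((hs n).2.2.2.1 _ (hx n)).1,
      ge_of_tendsto' hxp.snd_nhds fun n => ((hs n).2.2.2.1 _ (hx n)).2⟩
  · obtain ⟨x, hx, hxp⟩ := happrox hp
    obtain ⟨y, hy, hyq⟩ := happrox hq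
    exact le_of_tendsto_of_tendsto hxp.snd_nhds hyq.snd_nhds
      ((hxp.fst_nhds.eventually_lt hyq.fst_nhds hpq).mono fun n hn =>
        (hs n).2.2.2.2 _ (hx n) _ (hy n) hn)

/-- a set `H` of monotone graphs is precompact in `(𝕄, ρ)` (every sequence in `H`
has a subsequence converging in Hausdorff distance to a monotone graph) iff the set of extent
pairs `(z₀(Γ), z₁(Γ))`, `Γ ∈ H`, is bounded in `ℝ²`. -/
theorem stmt_5 (H : Set (Set (ℝ × ℝ))) (hH : ∀ Γ ∈ H, IsMonotoneGraph Γ) :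
    ((∀ Γ : ℕ → Set (ℝ × ℝ), (∀ n, Γ n ∈ H) →
        ∃ φ : ℕ → ℕ, StrictMono φ ∧ ∃ L : Set (ℝ × ℝ), IsMonotoneGraph L ∧
          Tendsto (fun n => Metric.hausdorffDist (Γ (φ n)) L) atTop (nhds 0)) ↔
      Bornology.IsBounded {q : ℝ × ℝ | ∃ Γ ∈ H, q = (z0 Γ, z1 Γ)}) := by
  rw [isBounded_extents_iff_isBounded_sUnion hH]
  constructor
  · intro hpre
    refine isBounded_sUnion_of_forall_exists_tendsto_hausdorffDist
      (fun Γ hΓ => ⟨(hH Γ hΓ).2.1.nonempty, (hH Γ hΓ).1.isBounded⟩) fun Γ hΓ => ?_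
    obtain ⟨φ, hφ, L, hL, hconv⟩ := hpre Γ hΓ
    exact ⟨φ, hφ, L, hL.2.1.nonempty, hL.1.isBounded, hconv⟩
  · intro hb Γ hΓ
    obtain ⟨φ, hφ, L, hLc, hLne, hconv⟩ := exists_subseq_tendsto_hausdorffDist
      (hb.isCompact_closure.totallyBounded.subset subset_closure)
      (fun n => (hH _ (hΓ n)).1) (fun n => (hH _ (hΓ n)).2.1.nonempty)
      fun n => subset_sUnion_of_mem (hΓ n)
    exact ⟨φ, hφ, L, .of_tendsto_hausdorffDist (fun n => hH _ (hΓ (φ n))) hLc hLne hconv, hconv⟩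
end

section
/- Under the size-biased branching transition, for every r ∈ ℕ there is a polynomial P_{r−1} of degree r−1 such that E[X_{n+1}^r | X_n] ≤ X_n^r + P_{r−1}(X_n). Consequently, for every r there is a constant c_r such that E[X_n^r] ≤ c_r n^r for all n ≥ 1, when X_0 = 1. -/
/-!
Expanding `(i₁ + ⋯ + i_k) ^ s` as a sum over maps `g : Fin s → Fin k` factorizes its expectation
into `∏ⱼ B_{|g⁻¹(j)|}`. Injective `g` contribute exactly `1` since `B₀ = B₁ = 1`, which gives the
leading term `k ^ s`; the at most `s² k ^ (s - 1)` non-injective ones contribute at most `D ^ s`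
each. Dividing by `k` bounds `E[X_{n+1}^r | X_n = k]` by `k ^ r + C_r k ^ (r - 1)`, hence
`E[X_{n+1}^r] ≤ E[X_n^r] + C_r E[X_n^{r-1}]`, and induction on `r` gives
`E[X_n^r] ≤ c_r (n + 1) ^ r`.
-/

open Finset

/-- Transition kernel of the size-biased branching chain: probability of going from `k` to `m`. -/
noncomputable def sbTrans (D : ℕ) (p : Fin (D + 1) → ℝ) (k m : ℕ) : ℝ :=
  ∑ f : Fin k → Fin (D + 1),
    if (∑ j, (f j : ℕ)) = m then ((m : ℝ) / k) * ∏ j, p (f j) else 0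

/-- Law of the chain at time `n`, started from `X₀ = 1`. -/
noncomputable def sbMass (D : ℕ) (p : Fin (D + 1) → ℝ) : ℕ → ℕ → ℝ
  | 0 => fun m => if m = 1 then 1 else 0
  | n + 1 => fun m => ∑ k ∈ range (D ^ n + 1), sbMass D p n k * sbTrans D p k m

/-- Conditional `r`-th moment `E[X_{n+1}^r | X_n = k] = (1/k) Σ_f (Σ f)^{r+1} Π p`. -/
noncomputable def sbCondMoment (D : ℕ) (p : Fin (D + 1) → ℝ) (k r : ℕ) : ℝ :=
  (1 / (k : ℝ)) * ∑ f : Fin k → Fin (D + 1),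
    ((∑ j, ((f j : ℕ) : ℝ)) ^ (r + 1)) * ∏ j, p (f j)

section Moments

variable {ι R : Type*} [Fintype ι] [CommSemiring R]

def powMoment (x p : ι → R) (m : ℕ) : R :=
  ∑ i, x i ^ m * p i

theorem sum_pow_mul_prod_eq_sum_prod_powMoment (x p : ι → R) (k s : ℕ) :
    ∑ f : Fin k → ι, (∑ j, x (f j)) ^ s * ∏ j, p (f j)
      = ∑ g : Fin s → Fin k, ∏ j, powMoment x p #{t | g t = j} := by
  have hfactor (g : Fin s → Fin k) (f : Fin k → ι) :
      (∏ t, x (f (g t))) * ∏ j, p (f j) = ∏ j, x (f j) ^ #{t | g t = j} * p (f j) := by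
    rw [prod_mul_distrib, ← prod_fiberwise' univ g (fun j => x (f j))]
    simp only [prod_const]
  simp_rw [Fintype.sum_pow, sum_mul]
  rw [sum_comm]
  refine sum_congr rfl fun g _ => ?_
  simp_rw [hfactor, powMoment]
  exact (Fintype.prod_sum fun j i => x i ^ #{t | g t = j} * p i).symm

end Moments

theorem card_filter_apply_eq_apply_le {k s : ℕ} {a b : Fin (s + 1)} (hab : a ≠ b) :
    #{g : Fin (s + 1) → Fin k | g a = g b} ≤ k ^ s := by
  obtain ⟨u, rfl⟩ := Fin.exists_succAbove_eq hab
  calc #{g : Fin (s + 1) → Fin k | g (b.succAbove u) = g b}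
      ≤ #(univ : Finset (Fin s → Fin k)) :=
        card_le_card_of_injOn (fun g => g ∘ b.succAbove) (by simp) ?_
    _ = k ^ s := by simp
  intro g hg g' hg' h
  simp only [coe_filter, mem_univ, true_and, Set.mem_ofPred_eq] at hg hg'
  funext t
  induction t using Fin.succAboveCases b with
  | x => rw [← hg, ← hg']; exact congrFun h u
  | p v => exact congrFun h v

theorem card_filter_not_injective_le (k s : ℕ) :
    #{g : Fin (s + 1) → Fin k | ¬ Function.Injective g} ≤ (s + 1) ^ 2 * k ^ s := by
  have hcover : ({g : Fin (s + 1) → Fin k | ¬ Function.Injective g} : Finset _)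
      ⊆ (univ.filter fun q : Fin (s + 1) × Fin (s + 1) => q.1 ≠ q.2).biUnion
          fun q => {g | g q.1 = g q.2} := by
    intro g hg
    obtain ⟨a, b, hab, hne⟩ := Function.not_injective_iff.mp (mem_filter.mp hg).2
    exact mem_biUnion.mpr ⟨(a, b), by simpa using hne, by simpa using hab⟩
  calc _ ≤ _ := card_le_card hcover
    _ ≤ ∑ q ∈ univ.filter fun q : Fin (s + 1) × Fin (s + 1) => q.1 ≠ q.2,
          #{g : Fin (s + 1) → Fin k | g q.1 = g q.2} := card_biUnion_le
    _ ≤ ∑ _q ∈ univ.filter fun q : Fin (s + 1) × Fin (s + 1) => q.1 ≠ q.2, k ^ s :=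
        sum_le_sum fun q hq => card_filter_apply_eq_apply_le (mem_filter.mp hq).2
    _ ≤ (s + 1) ^ 2 * k ^ s := by
        rw [sum_const, smul_eq_mul]
        gcongr
        exact (card_filter_le _ _).trans (by simp [sq])

section MomentBounds

variable {ι : Type*} [Fintype ι] {x p : ι → ℝ}

theorem powMoment_le (hx : ∀ i, 0 ≤ x i) {K : ℝ} (hxK : ∀ i, x i ≤ K) (hp : ∀ i, 0 ≤ p i)
    (hsum : ∑ i, p i = 1) (m : ℕ) : powMoment x p m ≤ K ^ m :=
  calc powMoment x p m ≤ ∑ i, K ^ m * p i :=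
        sum_le_sum fun i _ => mul_le_mul_of_nonneg_right (pow_le_pow_left₀ (hx i) (hxK i) m) (hp i)
    _ = K ^ m := by rw [← mul_sum, hsum, mul_one]

theorem prod_powMoment_card_fiber_le (hx : ∀ i, 0 ≤ x i) {K : ℝ} (hxK : ∀ i, x i ≤ K)
    (hp : ∀ i, 0 ≤ p i) (hsum : ∑ i, p i = 1) {k s : ℕ} (g : Fin s → Fin k) :
    ∏ j, powMoment x p #{t | g t = j} ≤ K ^ s :=
  calc ∏ j, powMoment x p #{t | g t = j} ≤ ∏ j, K ^ #{t | g t = j} :=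
        prod_le_prod (fun j _ => sum_nonneg fun i _ => mul_nonneg (pow_nonneg (hx i) _) (hp i))
          fun j _ => powMoment_le hx hxK hp hsum _
    _ = K ^ s := by rw [prod_pow_eq_pow_sum, ← card_eq_sum_card_fiberwise (by simp), card_univ,
          Fintype.card_fin]

theorem prod_powMoment_card_fiber_of_injective (hsum : ∑ i, p i = 1)
    (hmean : ∑ i, x i * p i = 1) {k s : ℕ} {g : Fin s → Fin k} (hg : Function.Injective g) :
    ∏ j, powMoment x p #{t | g t = j} = 1 := by
  refine prod_eq_one fun j _ => ?_
  have hfiber : #{t | g t = j} ≤ 1 :=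
    card_le_one.mpr fun a ha b hb => hg ((mem_filter.mp ha).2.trans (mem_filter.mp hb).2.symm)
  interval_cases #{t | g t = j}
  · simpa [powMoment] using hsum
  · simpa [powMoment] using hmean

theorem sum_pow_mul_prod_le (hx : ∀ i, 0 ≤ x i) {K : ℝ} (hxK : ∀ i, x i ≤ K)
    (hp : ∀ i, 0 ≤ p i) (hsum : ∑ i, p i = 1) (hmean : ∑ i, x i * p i = 1) (k s : ℕ) :
    ∑ f : Fin k → ι, (∑ j, x (f j)) ^ (s + 1) * ∏ j, p (f j)
      ≤ (k : ℝ) ^ (s + 1) + ((s : ℝ) + 1) ^ 2 * (k : ℝ) ^ s * K ^ (s + 1) := by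
  rw [sum_pow_mul_prod_eq_sum_prod_powMoment,
    ← sum_filter_add_sum_filter_not univ fun g : Fin (s + 1) → Fin k => Function.Injective g]
  gcongr
  · calc ∑ g ∈ univ.filter (fun g : Fin (s + 1) → Fin k => Function.Injective g),
          ∏ j, powMoment x p #{t | g t = j}
        = #{g : Fin (s + 1) → Fin k | Function.Injective g} :=
          by rw [sum_congr rfl fun g hg => prod_powMoment_card_fiber_of_injective hsum hmean
            (mem_filter.mp hg).2]; simp
      _ ≤ (k : ℝ) ^ (s + 1) := by
          exact_mod_cast (card_filter_le _ _).trans (by simp)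
  · calc ∑ g ∈ univ.filter (fun g : Fin (s + 1) → Fin k => ¬ Function.Injective g),
          ∏ j, powMoment x p #{t | g t = j}
        ≤ #{g : Fin (s + 1) → Fin k | ¬ Function.Injective g} * K ^ (s + 1) := by
          rw [← nsmul_eq_mul]
          exact sum_le_card_nsmul _ _ _ fun g _ =>
            prod_powMoment_card_fiber_le hx hxK hp hsum g
      _ ≤ ((s : ℝ) + 1) ^ 2 * (k : ℝ) ^ s * K ^ (s + 1) := by
          obtain ⟨i, -, -⟩ := exists_ne_zero_of_sum_ne_zero (hsum ▸ one_ne_zero)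
          have hK : 0 ≤ K := (hx i).trans (hxK i)
          gcongr
          exact_mod_cast card_filter_not_injective_le k s

end MomentBounds

theorem le_add_mul_mul_succ_pow_of_le_add_mul {a b : ℕ → ℝ} {C c : ℝ} {r : ℕ} (hC : 0 ≤ C)
    (hc : 0 ≤ c) (hstep : ∀ n, a (n + 1) ≤ a n + C * b n)
    (hb : ∀ n, b n ≤ c * ((n : ℝ) + 1) ^ r) (n : ℕ) :
    a n ≤ a 0 + C * c * n * ((n : ℝ) + 1) ^ r := by
  induction n with
  | zero => simp
  | succ n ih =>
    have hpow : ((n : ℝ) + 1) ^ r ≤ ((n : ℝ) + 1 + 1) ^ r := by gcongr; linarith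
    calc a (n + 1) ≤ a 0 + C * c * n * ((n : ℝ) + 1) ^ r + C * (c * ((n : ℝ) + 1) ^ r) :=
          (hstep n).trans (add_le_add ih (mul_le_mul_of_nonneg_left (hb n) hC))
      _ = a 0 + C * c * (n + 1) * ((n : ℝ) + 1) ^ r := by ring
      _ ≤ a 0 + C * c * (n + 1) * ((n : ℝ) + 1 + 1) ^ r := by gcongr
      _ = a 0 + C * c * ↑(n + 1) * (↑(n + 1) + 1) ^ r := by push_cast; ring

section Chain

variable {D : ℕ} {p : Fin (D + 1) → ℝ}

theorem sbCondMoment_succ_le (hp : ∀ i, 0 ≤ p i) (hsum : ∑ i, p i = 1)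
    (hmean : ∑ i, (i.1 : ℝ) * p i = 1) (k r : ℕ) :
    sbCondMoment D p k (r + 1)
      ≤ (k : ℝ) ^ (r + 1) + ((r : ℝ) + 2) ^ 2 * (D : ℝ) ^ (r + 2) * (k : ℝ) ^ r := by
  rcases Nat.eq_zero_or_pos k with rfl | hk
  · simp only [sbCondMoment, Nat.cast_zero, div_zero, zero_mul]
    positivity
  have hbound := sum_pow_mul_prod_le (x := fun i : Fin (D + 1) => ((i : ℕ) : ℝ)) (K := D)
    (fun i => by positivity) (fun i => by exact_mod_cast Nat.lt_succ_iff.mp i.isLt) hp hsum hmean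
    k (r + 1)
  calc sbCondMoment D p k (r + 1)
      ≤ 1 / (k : ℝ) * ((k : ℝ) ^ (r + 1 + 1)
          + ((↑(r + 1) : ℝ) + 1) ^ 2 * (k : ℝ) ^ (r + 1) * (D : ℝ) ^ (r + 1 + 1)) :=
        mul_le_mul_of_nonneg_left hbound (by positivity)
    _ = (k : ℝ) ^ (r + 1) + ((r : ℝ) + 2) ^ 2 * (D : ℝ) ^ (r + 2) * (k : ℝ) ^ r := by
        field_simp
        push_cast
        ring

theorem sbCondMoment_order_zero (hsum : ∑ i, p i = 1) (hmean : ∑ i, (i.1 : ℝ) * p i = 1) {k : ℕ}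
    (hk : k ≠ 0) : sbCondMoment D p k 0 = 1 := by
  rw [sbCondMoment,
    sum_pow_mul_prod_eq_sum_prod_powMoment (fun i : Fin (D + 1) => ((i : ℕ) : ℝ)) p k 1,
    sum_congr rfl fun g _ => prod_powMoment_card_fiber_of_injective hsum hmean
      (Function.injective_of_subsingleton g)]
  simp [hk]

theorem sbTrans_nonneg (hp : ∀ i, 0 ≤ p i) (k m : ℕ) : 0 ≤ sbTrans D p k m :=
  sum_nonneg fun f _ => by
    split_ifs
    · exact mul_nonneg (by positivity) (prod_nonneg fun j _ => hp (f j))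
    · exact le_rfl

theorem sbMass_nonneg (hp : ∀ i, 0 ≤ p i) (n m : ℕ) : 0 ≤ sbMass D p n m := by
  induction n generalizing m with
  | zero => simp only [sbMass]; split_ifs <;> norm_num
  | succ n ih => exact sum_nonneg fun k _ => mul_nonneg (ih k) (sbTrans_nonneg hp k m)

theorem sbMass_apply_zero (n : ℕ) : sbMass D p n 0 = 0 := by
  cases n <;> simp [sbMass, sbTrans]

theorem sum_sbTrans_mul_pow {k N : ℕ} (hN : D * k < N) (r : ℕ) :
    ∑ m ∈ range N, sbTrans D p k m * (m : ℝ) ^ r = sbCondMoment D p k r := by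
  simp_rw [sbTrans, sbCondMoment, sum_mul, ite_mul, zero_mul]
  rw [sum_comm, mul_sum]
  refine sum_congr rfl fun f _ => ?_
  have hmem : ∑ j, (f j : ℕ) ∈ range N := by
    refine mem_range.mpr (lt_of_le_of_lt ?_ hN)
    calc ∑ j, (f j : ℕ) ≤ ∑ _j : Fin k, D := sum_le_sum fun j _ => Nat.lt_succ_iff.mp (f j).isLt
      _ = D * k := by simp [mul_comm]
  rw [sum_ite_eq (range N) (∑ j, (f j : ℕ)), if_pos hmem]
  push_cast
  ring

noncomputable def sbMoment (D : ℕ) (p : Fin (D + 1) → ℝ) (n r : ℕ) : ℝ :=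
  ∑ m ∈ range (D ^ n + 1), sbMass D p n m * (m : ℝ) ^ r

theorem sbMoment_time_zero (r : ℕ) : sbMoment D p 0 r = 1 := by
  simp [sbMoment, sbMass]

theorem sbMoment_succ (n r : ℕ) :
    sbMoment D p (n + 1) r = ∑ k ∈ range (D ^ n + 1), sbMass D p n k * sbCondMoment D p k r := by
  simp_rw [sbMoment, sbMass, sum_mul, mul_assoc]
  rw [sum_comm]
  refine sum_congr rfl fun k hk => ?_
  rw [← mul_sum, sum_sbTrans_mul_pow]
  calc D * k ≤ D * D ^ n := Nat.mul_le_mul_left _ (Nat.lt_succ_iff.mp (mem_range.mp hk))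
    _ < D ^ (n + 1) + 1 := by rw [pow_succ']; exact Nat.lt_succ_self _

theorem sbMoment_order_zero (hsum : ∑ i, p i = 1) (hmean : ∑ i, (i.1 : ℝ) * p i = 1)
    (n : ℕ) : sbMoment D p n 0 = 1 := by
  induction n with
  | zero => exact sbMoment_time_zero 0
  | succ n ih =>
    rw [sbMoment_succ, ← ih, sbMoment]
    refine sum_congr rfl fun k _ => ?_
    rcases eq_or_ne k 0 with rfl | hk
    · simp [sbMass_apply_zero]
    · rw [sbCondMoment_order_zero hsum hmean hk, pow_zero]

theorem sbMoment_succ_le (hp : ∀ i, 0 ≤ p i) (hsum : ∑ i, p i = 1)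
    (hmean : ∑ i, (i.1 : ℝ) * p i = 1) (n r : ℕ) :
    sbMoment D p (n + 1) (r + 1)
      ≤ sbMoment D p n (r + 1) + ((r : ℝ) + 2) ^ 2 * (D : ℝ) ^ (r + 2) * sbMoment D p n r := by
  rw [sbMoment_succ, sbMoment, sbMoment, mul_sum, ← sum_add_distrib]
  refine sum_le_sum fun k _ => ?_
  calc sbMass D p n k * sbCondMoment D p k (r + 1)
      ≤ sbMass D p n k
          * ((k : ℝ) ^ (r + 1) + ((r : ℝ) + 2) ^ 2 * (D : ℝ) ^ (r + 2) * (k : ℝ) ^ r) :=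
        mul_le_mul_of_nonneg_left (sbCondMoment_succ_le hp hsum hmean k r)
          (sbMass_nonneg hp n k)
    _ = _ := by ring

theorem exists_sbMoment_le (hp : ∀ i, 0 ≤ p i) (hsum : ∑ i, p i = 1)
    (hmean : ∑ i, (i.1 : ℝ) * p i = 1) (r : ℕ) :
    ∃ c : ℝ, 0 ≤ c ∧ ∀ n : ℕ, sbMoment D p n r ≤ c * ((n : ℝ) + 1) ^ r := by
  induction r with
  | zero => exact ⟨1, zero_le_one, fun n => by simp [sbMoment_order_zero hsum hmean n]⟩
  | succ r ih =>
    obtain ⟨c, hc, hmoment⟩ := ih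
    set C : ℝ := ((r : ℝ) + 2) ^ 2 * (D : ℝ) ^ (r + 2)
    have hC : 0 ≤ C := by positivity
    refine ⟨1 + C * c, by positivity, fun n => ?_⟩
    have hgrowth := le_add_mul_mul_succ_pow_of_le_add_mul (a := (sbMoment D p · (r + 1))) hC hc
      (sbMoment_succ_le hp hsum hmean · r) hmoment n
    rw [sbMoment_time_zero] at hgrowth
    have hn : (1 : ℝ) ≤ (n : ℝ) + 1 := by linarith [n.cast_nonneg (α := ℝ)]
    have hpow : (n : ℝ) * ((n : ℝ) + 1) ^ r ≤ ((n : ℝ) + 1) ^ (r + 1) := by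
      rw [pow_succ']; gcongr; linarith
    calc sbMoment D p n (r + 1) ≤ 1 + C * c * (n * ((n : ℝ) + 1) ^ r) := by linarith
      _ ≤ ((n : ℝ) + 1) ^ (r + 1) + C * c * ((n : ℝ) + 1) ^ (r + 1) := by
          gcongr
          exact one_le_pow₀ hn
      _ = (1 + C * c) * ((n : ℝ) + 1) ^ (r + 1) := by ring

end Chain

/-- `E[X_{n+1}^r | X_n] ≤ X_n^r + P_{r−1}(X_n)` for a polynomial of degree `≤ r−1`,
and consequently `E[X_n^r] ≤ c_r n^r`. -/
theorem stmt_9 (D : ℕ) (p : Fin (D + 1) → ℝ) (hp : ∀ i, 0 ≤ p i)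
    (hsum : ∑ i, p i = 1) (hmean : ∑ i, (i.1 : ℝ) * p i = 1) :
    (∀ r : ℕ, 1 ≤ r → ∃ P : Polynomial ℝ, P.natDegree ≤ r - 1 ∧
      ∀ k : ℕ, 1 ≤ k → sbCondMoment D p k r ≤ (k : ℝ) ^ r + P.eval (k : ℝ)) ∧
    (∀ r : ℕ, 1 ≤ r → ∃ c : ℝ, ∀ n : ℕ, 1 ≤ n →
      (∑ m ∈ range (D ^ n + 1), sbMass D p n m * (m : ℝ) ^ r) ≤ c * (n : ℝ) ^ r) := by
  refine ⟨fun r hr => ?_, fun r _ => ?_⟩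
  · obtain ⟨r, rfl⟩ := Nat.exists_eq_add_of_le' hr
    refine ⟨Polynomial.C (((r : ℝ) + 2) ^ 2 * (D : ℝ) ^ (r + 2)) * Polynomial.X ^ r, ?_,
      fun k _ => by simpa using sbCondMoment_succ_le hp hsum hmean k r⟩
    exact (Polynomial.natDegree_C_mul_X_pow_le _ r).trans (by simp)
  · obtain ⟨c, hc, hmoment⟩ := exists_sbMoment_le hp hsum hmean r
    refine ⟨c * 2 ^ r, fun n hn => ?_⟩
    have hn' : (1 : ℝ) ≤ n := by exact_mod_cast hn
    calc sbMoment D p n r ≤ c * ((n : ℝ) + 1) ^ r := hmoment n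
      _ ≤ c * (2 * (n : ℝ)) ^ r := by gcongr; linarith
      _ = c * 2 ^ r * (n : ℝ) ^ r := by ring
end

section
/- In the size-biased branching chain, the conditional mean of the subpopulation progeny satisfies E[V_{m+1} | V_m = l, X_m = k] = l(1 + μ/k), where μ = B₂ − 1 and B₂ = Σ i² p_i. Equivalently, E[V_{m+1} − V_m | V_m = l, X_m = k] = μ l / k. -/
/-!
Write `x` for the offspring numbers. Then `subOff l f * totOff f = ∑_{j < l} ∑_{j'} x_j x_{j'}`,
and under the product law `∏ p` the coordinates are independent with mean `1`, so `x_j x_{j'}` has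
expectation `B₂` when `j = j'` and `1` otherwise. Each of the `l` marked vertices therefore
contributes `B₂ + (k - 1)`, and dividing by `k` gives `l (1 + (B₂ - 1) / k)`.
-/

open Finset

/-- Total offspring of all `k` vertices. -/
def totOff {k D : ℕ} (f : Fin k → Fin (D + 1)) : ℝ := ∑ j, ((f j : ℕ) : ℝ)

/-- Offspring of the first `l` vertices. -/
def subOff {k D : ℕ} (l : ℕ) (f : Fin k → Fin (D + 1)) : ℝ :=
  ∑ j ∈ univ.filter (fun j : Fin k => (j : ℕ) < l), ((f j : ℕ) : ℝ)

section ProductWeights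

variable {ι α R : Type*} [Fintype ι] [DecidableEq ι] [Fintype α] [CommRing R] {p : α → R}

theorem sum_prod_apply_mul_prod_eq_prod_sum (hsum : ∑ a, p a = 1) (s : Finset ι)
    (g : ι → α → R) :
    ∑ f : ι → α, (∏ i ∈ s, g i (f i)) * ∏ i, p (f i) = ∏ i ∈ s, ∑ a, g i a * p a := by
  have hfactor (i : ι) :
      ∑ a, (if i ∈ s then g i a else 1) * p a = if i ∈ s then ∑ a, g i a * p a else 1 := by
    split_ifs <;> simp [hsum]
  calc ∑ f : ι → α, (∏ i ∈ s, g i (f i)) * ∏ i, p (f i)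
      = ∑ f : ι → α, ∏ i, (if i ∈ s then g i (f i) else 1) * p (f i) := by
        simp only [prod_mul_distrib, prod_ite_mem, univ_inter]
    _ = ∏ i, ∑ a, (if i ∈ s then g i a else 1) * p a :=
        (Fintype.prod_sum fun i a => (if i ∈ s then g i a else 1) * p a).symm
    _ = ∏ i ∈ s, ∑ a, g i a * p a := by simp only [hfactor, prod_ite_mem, univ_inter]

theorem sum_apply_mul_prod (hsum : ∑ a, p a = 1) (x : α → R) (j : ι) :
    ∑ f : ι → α, x (f j) * ∏ i, p (f i) = ∑ a, x a * p a := by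
  simpa using sum_prod_apply_mul_prod_eq_prod_sum hsum {j} (fun _ => x)

theorem sum_apply_mul_apply_mul_prod_of_ne (hsum : ∑ a, p a = 1) (x : α → R) {j j' : ι}
    (hj : j ≠ j') :
    ∑ f : ι → α, x (f j) * x (f j') * ∏ i, p (f i) = (∑ a, x a * p a) ^ 2 := by
  simpa [prod_pair hj, sq] using sum_prod_apply_mul_prod_eq_prod_sum hsum {j, j'} (fun _ => x)

theorem sum_apply_mul_apply_mul_prod (hsum : ∑ a, p a = 1) {x : α → R}
    (hmean : ∑ a, x a * p a = 1) (j j' : ι) :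
    ∑ f : ι → α, x (f j) * x (f j') * ∏ i, p (f i) =
      if j = j' then ∑ a, x a ^ 2 * p a else 1 := by
  split_ifs with hj
  · subst hj
    simp_rw [← sq]
    exact sum_apply_mul_prod hsum (fun a => x a ^ 2) j
  · rw [sum_apply_mul_apply_mul_prod_of_ne hsum x hj, hmean, one_pow]

end ProductWeights

theorem sum_subOff_mul_totOff_mul_prod {D : ℕ} {p : Fin (D + 1) → ℝ}
    (hsum : ∑ i, p i = 1) (hmean : ∑ i, (i.1 : ℝ) * p i = 1) {k l : ℕ} (hl : l ≤ k) :
    ∑ f : Fin k → Fin (D + 1), subOff l f * totOff f * ∏ j, p (f j) =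
      l * (∑ i, (i.1 : ℝ) ^ 2 * p i + (k - 1)) := by
  have hrow (j : Fin k) :
      ∑ j', ∑ f : Fin k → Fin (D + 1), ((f j : ℕ) : ℝ) * ((f j' : ℕ) : ℝ) * ∏ i, p (f i) =
        ∑ i, (i.1 : ℝ) ^ 2 * p i + (k - 1) := by
    simp only [sum_apply_mul_apply_mul_prod hsum hmean]
    rw [sum_ite, filter_eq, filter_ne]
    simp only [mem_univ, if_true, sum_const, card_singleton, one_smul, card_erase_of_mem,
      card_univ, Fintype.card_fin, nsmul_eq_mul, mul_one, Nat.cast_pred (Fin.pos j)]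
  calc ∑ f : Fin k → Fin (D + 1), subOff l f * totOff f * ∏ j, p (f j)
      = ∑ j ∈ univ.filter (fun j : Fin k => (j : ℕ) < l), ∑ j',
          ∑ f : Fin k → Fin (D + 1), ((f j : ℕ) : ℝ) * ((f j' : ℕ) : ℝ) * ∏ i, p (f i) := by
        simp only [subOff, totOff, sum_mul_sum]
        simp only [sum_mul]
        rw [sum_comm]
        exact sum_congr rfl fun j _ => sum_comm
    _ = l * (∑ i, (i.1 : ℝ) ^ 2 * p i + (k - 1)) := by
        rw [sum_congr rfl fun j _ => hrow j, sum_const, Fin.card_filter_val_lt,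
          min_eq_right hl, nsmul_eq_mul]

theorem stmt_11_general (D : ℕ) (p : Fin (D + 1) → ℝ)
    (hsum : ∑ i, p i = 1) (hmean : ∑ i, (i.1 : ℝ) * p i = 1)
    (k l : ℕ) (hk : 0 < k) (hl : l ≤ k) :
    (1 / (k : ℝ)) * (∑ f : Fin k → Fin (D + 1), subOff l f * totOff f * ∏ j, p (f j)) =
      (l : ℝ) * (1 + ((∑ i, (i.1 : ℝ) ^ 2 * p i) - 1) / k) ∧
    (1 / (k : ℝ)) * (∑ f : Fin k → Fin (D + 1), subOff l f * totOff f * ∏ j, p (f j)) - l =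
      ((∑ i, (i.1 : ℝ) ^ 2 * p i) - 1) * l / k := by
  have hk' : (k : ℝ) ≠ 0 := Nat.cast_ne_zero.mpr hk.ne'
  rw [sum_subOff_mul_totOff_mul_prod hsum hmean hl]
  constructor <;> field_simp <;> ring

/-- `E[V_{m+1} | V_m = l, X_m = k] = l(1 + μ/k)` with `μ = B₂ − 1`; equivalently
`E[V_{m+1} − V_m | V_m = l, X_m = k] = μ l / k`. -/
theorem stmt_11 (D : ℕ) (p : Fin (D + 1) → ℝ) (hp : ∀ i, 0 ≤ p i)
    (hsum : ∑ i, p i = 1) (hmean : ∑ i, (i.1 : ℝ) * p i = 1)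
    (k l : ℕ) (hk : 0 < k) (hl : l ≤ k) :
    (1 / (k : ℝ)) * (∑ f : Fin k → Fin (D + 1), subOff l f * totOff f * ∏ j, p (f j)) =
      (l : ℝ) * (1 + ((∑ i, (i.1 : ℝ) ^ 2 * p i) - 1) / k) ∧
    (1 / (k : ℝ)) * (∑ f : Fin k → Fin (D + 1), subOff l f * totOff f * ∏ j, p (f j)) - l =
      ((∑ i, (i.1 : ℝ) ^ 2 * p i) - 1) * l / k :=
  stmt_11_general D p hsum hmean k l hk hl
end

section
/- In the size-biased branching chain, for every even integer r ≥ 2 there is a constant C'_r, independent of k, such that E[(V_{m+1} − V_m)^r | V_m = l, X_m = k] ≤ C'_r l^{r/2}. A key step: the quantity Σ_{i₁,...,i_l} ((i₁−1)+⋯+(i_l−1))^r p_{i₁}⋯p_{i_l} expands as Σ over partitions j of r into at most l parts of K_j B̄_{j₁}⋯B̄_{j_l}, where B̄_j = Σ_i (i−1)^j p_i satisfies B̄₁ = 0, so only partitions with no part equal to 1 contribute, and these have at most r/2 nonzero parts. -/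
open Finset

/-! With `c = netOffspring`, i.e. `c i = i - 1`, `subOff l f - l` is the sum `X` of `c` over the
first `l` vertices and `totOff f = X + Y + k`, where `Y` is the sum of `c` over the other vertices.
The weights factor over the two blocks and `Y` has mean `∑ c i * p i = 0`, so the size-biased sum
equals `E X ^ (r + 1) + k * E X ^ r`, where `E X ^ r = sumMoment p c l r`.

Splitting off one summand,
`sumMoment p c (n + 1) r = ∑ m, r.choose m * sumMoment p c n m * B (r - m)` with
`B j = sumMoment p c 1 j = ∑ c i ^ j * p i`. As `B 0 = 1` and `B 1 = 0`, the increment in `n` only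
involves moments of order `≤ r - 2`, so induction on `r` and telescoping in `n` give
`|sumMoment p c n r| ≤ K * n ^ (r / 2)`. -/

section SumMoment

variable {α : Type*} [Fintype α] (p c : α → ℝ)

def sumMoment (n r : ℕ) : ℝ := ∑ g : Fin n → α, (∑ i, c (g i)) ^ r * ∏ i, p (g i)

theorem sum_mul_mul_prod_fin_add {m n : ℕ} (F : (Fin m → α) → ℝ) (G : (Fin n → α) → ℝ) :
    ∑ f : Fin (m + n) → α,
        F (fun i => f (Fin.castAdd n i)) * G (fun i => f (Fin.natAdd m i)) * ∏ j, p (f j) =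
      (∑ g, F g * ∏ i, p (g i)) * ∑ h, G h * ∏ i, p (h i) := by
  rw [← (Fin.appendEquiv m n).sum_comp, Fintype.sum_prod_type, sum_mul_sum]
  refine sum_congr rfl fun g _ => sum_congr rfl fun h _ => ?_
  simp only [Fin.appendEquiv_apply, Fin.append_left, Fin.append_right, Fin.prod_univ_add]
  ring

theorem sum_pow_mul_pow_prod_fin_add (m n a b : ℕ) :
    ∑ f : Fin (m + n) → α, (∑ i, c (f (Fin.castAdd n i))) ^ a *
        (∑ i, c (f (Fin.natAdd m i))) ^ b * ∏ j, p (f j) =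
      sumMoment p c m a * sumMoment p c n b :=
  sum_mul_mul_prod_fin_add p (fun g => (∑ i, c (g i)) ^ a) (fun h => (∑ i, c (h i)) ^ b)

theorem sumMoment_zero_left (r : ℕ) : sumMoment p c 0 r = 0 ^ r := by
  simp [sumMoment]

theorem sumMoment_one_left (r : ℕ) : sumMoment p c 1 r = ∑ a, c a ^ r * p a := by
  simp [sumMoment, ← (Equiv.funUnique (Fin 1) α).symm.sum_comp]

theorem sumMoment_succ (n r : ℕ) :
    sumMoment p c (n + 1) r =
      ∑ m ∈ range (r + 1), r.choose m * sumMoment p c n m * sumMoment p c 1 (r - m) := by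
  simp_rw [mul_assoc, ← sum_pow_mul_pow_prod_fin_add, mul_sum]
  rw [sumMoment, sum_comm]
  refine sum_congr rfl fun f _ => ?_
  rw [Fin.sum_univ_add, add_pow, sum_mul]
  exact sum_congr rfl fun m _ => by ring

variable {p c}

theorem sumMoment_zero_right (hp : ∑ a, p a = 1) (n : ℕ) : sumMoment p c n 0 = 1 := by
  simp [sumMoment, ← Fintype.sum_pow, hp]

theorem sumMoment_one_right (hp : ∑ a, p a = 1) (hc : ∑ a, c a * p a = 0) (n : ℕ) :
    sumMoment p c n 1 = 0 := by
  induction n with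
  | zero => simp [sumMoment_zero_left]
  | succ n ih =>
    rw [sumMoment_succ, sum_range_succ, sum_range_one, ih, sumMoment_one_left]
    simp [hc, sumMoment_zero_right hp]

theorem sumMoment_succ_sub (hp : ∑ a, p a = 1) (hc : ∑ a, c a * p a = 0) (n r : ℕ) :
    sumMoment p c (n + 1) (r + 2) - sumMoment p c n (r + 2) =
      ∑ m ∈ range (r + 1), (r + 2).choose m * sumMoment p c n m * sumMoment p c 1 (r + 2 - m) := by
  have hB0 : sumMoment p c 1 0 = 1 := sumMoment_zero_right hp 1
  have hB1 : sumMoment p c 1 1 = 0 := sumMoment_one_right hp hc 1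
  rw [sumMoment_succ, sum_range_succ, sum_range_succ, show r + 2 - (r + 1) = 1 by omega,
    Nat.sub_self, hB0, hB1, Nat.choose_self]
  ring

theorem abs_le_mul_pow_succ_of_abs_sub_le {u : ℕ → ℝ} {M : ℝ} {e : ℕ} (h0 : u 0 = 0)
    (h : ∀ n : ℕ, |u (n + 1) - u n| ≤ M * (n + 1) ^ e) (n : ℕ) : |u n| ≤ M * n ^ (e + 1) := by
  have hM : 0 ≤ M := by simpa using (abs_nonneg _).trans (h 0)
  induction n with
  | zero => simp [h0]
  | succ n ih =>
    calc |u (n + 1)| ≤ |u n| + |u (n + 1) - u n| := by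
          simpa using abs_add_le (u n) (u (n + 1) - u n)
      _ ≤ M * n ^ (e + 1) + M * (n + 1) ^ e := add_le_add ih (h n)
      _ ≤ M * (n * (n + 1) ^ e) + M * (n + 1) ^ e := by
          rw [pow_succ']
          gcongr
          linarith
      _ = M * ((n + 1 : ℕ) : ℝ) ^ (e + 1) := by push_cast; ring

theorem abs_sumMoment_succ_sub_le (hp : ∑ a, p a = 1) (hc : ∑ a, c a * p a = 0) {r : ℕ} {K : ℝ}
    (hK0 : 0 ≤ K) (hK : ∀ m ≤ r, ∀ n : ℕ, |sumMoment p c n m| ≤ K * n ^ (m / 2)) (n : ℕ) :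
    |sumMoment p c (n + 1) (r + 2) - sumMoment p c n (r + 2)| ≤
      (∑ m ∈ range (r + 1), (r + 2).choose m * K * |sumMoment p c 1 (r + 2 - m)|) *
        (n + 1) ^ (r / 2) := by
  rw [sumMoment_succ_sub hp hc, sum_mul]
  refine (abs_sum_le_sum_abs _ _).trans (sum_le_sum fun m hm => ?_)
  have hmr : m ≤ r := Nat.lt_succ_iff.mp (mem_range.mp hm)
  have hE : |sumMoment p c n m| ≤ K * (n + 1) ^ (r / 2) :=
    (hK m hmr n).trans <| by
      gcongr
      calc (n : ℝ) ^ (m / 2) ≤ (n + 1) ^ (m / 2) := by gcongr; linarith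
        _ ≤ (n + 1) ^ (r / 2) := pow_le_pow_right₀ (by linarith) (Nat.div_le_div_right hmr)
  rw [abs_mul, abs_mul, Nat.abs_cast]
  calc (r + 2).choose m * |sumMoment p c n m| * |sumMoment p c 1 (r + 2 - m)|
      ≤ (r + 2).choose m * (K * (n + 1) ^ (r / 2)) * |sumMoment p c 1 (r + 2 - m)| := by gcongr
    _ = _ := by ring

theorem exists_abs_sumMoment_le (hp : ∑ a, p a = 1) (hc : ∑ a, c a * p a = 0) (r : ℕ) :
    ∃ K, 0 ≤ K ∧ ∀ m ≤ r, ∀ n : ℕ, |sumMoment p c n m| ≤ K * n ^ (m / 2) := by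
  induction r using Nat.twoStepInduction with
  | zero =>
    refine ⟨1, zero_le_one, fun m hm n => ?_⟩
    obtain rfl : m = 0 := Nat.le_zero.mp hm
    simp [sumMoment_zero_right hp]
  | one =>
    refine ⟨1, zero_le_one, fun m hm n => ?_⟩
    interval_cases m
    · simp [sumMoment_zero_right hp]
    · simp [sumMoment_one_right hp hc]
  | more r _ ih =>
    obtain ⟨K, hK0, hK⟩ := ih
    set M := ∑ m ∈ range (r + 1), (r + 2).choose m * K * |sumMoment p c 1 (r + 2 - m)|
    have hM : ∀ n : ℕ, |sumMoment p c n (r + 2)| ≤ M * n ^ (r / 2 + 1) :=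
      abs_le_mul_pow_succ_of_abs_sub_le (by simp [sumMoment_zero_left])
        (abs_sumMoment_succ_sub_le hp hc hK0 fun m hm => hK m (by omega))
    refine ⟨max K M, hK0.trans (le_max_left _ _), fun m hm n => ?_⟩
    rcases Nat.lt_or_eq_of_le hm with hm | rfl
    · exact (hK m (by omega) n).trans (by gcongr; exact le_max_left _ _)
    · rw [show (r + 2) / 2 = r / 2 + 1 by omega]
      exact (hM n).trans (by gcongr; exact le_max_right _ _)

end SumMoment

def netOffspring {D : ℕ} (i : Fin (D + 1)) : ℝ := (i : ℕ) - 1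

theorem sum_netOffspring_mul_eq_zero {D : ℕ} {p : Fin (D + 1) → ℝ} (hsum : ∑ i, p i = 1)
    (hmean : ∑ i, (i.1 : ℝ) * p i = 1) : ∑ i, netOffspring i * p i = 0 := by
  simp [netOffspring, sub_mul, sum_sub_distrib, hsum, hmean]

theorem subOff_sub_eq {D l n : ℕ} (f : Fin (l + n) → Fin (D + 1)) :
    subOff l f - l = ∑ i : Fin l, netOffspring (f (Fin.castAdd n i)) := by
  simp [subOff, netOffspring, sum_filter, Fin.sum_univ_add]

theorem totOff_eq {D l n : ℕ} (f : Fin (l + n) → Fin (D + 1)) :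
    totOff f = ∑ i : Fin l, netOffspring (f (Fin.castAdd n i)) +
      ∑ i : Fin n, netOffspring (f (Fin.natAdd l i)) + (l + n : ℕ) := by
  simp only [totOff, Fin.sum_univ_add, netOffspring, sum_sub_distrib, sum_const, card_univ,
    Fintype.card_fin, nsmul_eq_mul, mul_one, Nat.cast_add]
  ring

theorem sum_subOff_pow_mul_totOff {D : ℕ} {p : Fin (D + 1) → ℝ} (hsum : ∑ i, p i = 1)
    (hmean : ∑ i, (i.1 : ℝ) * p i = 1) {k l : ℕ} (hl : l ≤ k) (r : ℕ) :
    ∑ f : Fin k → Fin (D + 1), (subOff l f - l) ^ r * totOff f * ∏ j, p (f j) =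
      sumMoment p netOffspring l (r + 1) + k * sumMoment p netOffspring l r := by
  obtain ⟨n, rfl⟩ := Nat.exists_eq_add_of_le hl
  have hc := sum_netOffspring_mul_eq_zero hsum hmean
  have split : ∀ f : Fin (l + n) → Fin (D + 1), (subOff l f - l) ^ r * totOff f * ∏ j, p (f j) =
      (∑ i, netOffspring (f (Fin.castAdd n i))) ^ (r + 1) *
          (∑ i, netOffspring (f (Fin.natAdd l i))) ^ 0 * ∏ j, p (f j) +
        (∑ i, netOffspring (f (Fin.castAdd n i))) ^ r *
          (∑ i, netOffspring (f (Fin.natAdd l i))) ^ 1 * ∏ j, p (f j) +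
        ((l + n : ℕ) : ℝ) * ((∑ i, netOffspring (f (Fin.castAdd n i))) ^ r *
          (∑ i, netOffspring (f (Fin.natAdd l i))) ^ 0 * ∏ j, p (f j)) := by
    intro f
    rw [subOff_sub_eq, totOff_eq]
    ring
  rw [sum_congr rfl fun f _ => split f, sum_add_distrib, sum_add_distrib, ← mul_sum]
  simp only [sum_pow_mul_pow_prod_fin_add, sumMoment_zero_right hsum,
    sumMoment_one_right hsum hc]
  ring

theorem stmt_12_general (D : ℕ) (p : Fin (D + 1) → ℝ)
    (hsum : ∑ i, p i = 1) (hmean : ∑ i, (i.1 : ℝ) * p i = 1) :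
    ∀ s : ℕ, 1 ≤ s → ∃ C : ℝ, 0 < C ∧ ∀ k l : ℕ, 0 < k → l ≤ k →
      (1 / (k : ℝ)) * (∑ f : Fin k → Fin (D + 1),
          (subOff l f - l) ^ (2 * s) * totOff f * ∏ j, p (f j)) ≤
        C * (l : ℝ) ^ s := by
  intro s _
  obtain ⟨K, hK0, hK⟩ :=
    exists_abs_sumMoment_le hsum (sum_netOffspring_mul_eq_zero hsum hmean) (2 * s + 1)
  refine ⟨2 * K + 1, by positivity, fun k l hk hl => ?_⟩
  have hk1 : (1 : ℝ) ≤ k := by exact_mod_cast hk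
  set A := sumMoment p netOffspring l (2 * s + 1)
  set B := sumMoment p netOffspring l (2 * s)
  have hA : |A| ≤ K * l ^ s := by simpa [show (2 * s + 1) / 2 = s by omega] using hK _ le_rfl l
  have hB : |B| ≤ K * l ^ s := by simpa using hK (2 * s) (by omega) l
  rw [sum_subOff_pow_mul_totOff hsum hmean hl]
  calc 1 / (k : ℝ) * (A + k * B) = A / k + B := by field_simp
    _ ≤ |A| / k + |B| := by gcongr <;> exact le_abs_self _
    _ ≤ |A| + |B| := by gcongr; exact div_le_self (abs_nonneg A) hk1
    _ ≤ (2 * K + 1) * l ^ s := by nlinarith [pow_nonneg (Nat.cast_nonneg l : (0 : ℝ) ≤ l) s]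

/-- for every even `r = 2s ≥ 2` there is a constant `C'_r`, independent of `k`,
with `E[(V_{m+1} − V_m)^r | V_m = l, X_m = k] ≤ C'_r l^{r/2}`. -/
theorem stmt_12 (D : ℕ) (p : Fin (D + 1) → ℝ) (hp : ∀ i, 0 ≤ p i)
    (hsum : ∑ i, p i = 1) (hmean : ∑ i, (i.1 : ℝ) * p i = 1) :
    ∀ s : ℕ, 1 ≤ s → ∃ C : ℝ, 0 < C ∧ ∀ k l : ℕ, 0 < k → l ≤ k →
      (1 / (k : ℝ)) * (∑ f : Fin k → Fin (D + 1),
          (subOff l f - l) ^ (2 * s) * totOff f * ∏ j, p (f j)) ≤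
        C * (l : ℝ) ^ s :=
  stmt_12_general D p hsum hmean
end

section
/- Quadratic covariation identity for two nested subpopulations: in the size-biased branching chain with total population k and two marked subpopulations consisting of the first l₁ and the first l₂ vertices (0 ≤ l₁ ≤ l₂ ≤ k), E[V⁽¹⁾_{m+1} V⁽²⁾_{m+1} | V⁽¹⁾_m = l₁, V⁽²⁾_m = l₂, X_m = k] = (1/k)( l₁ B₃ + (l₁(k−1) + 2 l₁(l₂−1)) B₂ + l₁(l₂−1)(k−2) ), where B_m = Σ_{i=0}^D i^m p_i. -/
/-!
Expanding the three sums, the quantity is a sum of third mixed moments `E[X_a X_b X_c]` of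
i.i.d. offspring numbers of mean one. Such a moment is `1`, `B₂` or `B₃` according as the
indices `a, b, c` are pairwise distinct, exactly two of them coincide, or all three coincide, so
the sum only depends on how many index triples of each pattern lie in
`[0, l₁) × [0, l₂) × [0, k)`, and these counts are read off from the nesting of the intervals.
-/

open Finset

section IidOffspring

variable {D k : ℕ} (p : Fin (D + 1) → ℝ)

def moment (n : ℕ) : ℝ := ∑ i, (i.1 : ℝ) ^ n * p i

/-- Expectation of `g` when the `k` offspring numbers are independent with law `p`. -/
def iidExpect (g : (Fin k → Fin (D + 1)) → ℝ) : ℝ := ∑ f, g f * ∏ j, p (f j)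

lemma iidExpect_sum {ι : Type*} (s : Finset ι) (g : ι → (Fin k → Fin (D + 1)) → ℝ) :
    iidExpect p (fun f => ∑ i ∈ s, g i f) = ∑ i ∈ s, iidExpect p (g i) := by
  simp only [iidExpect, sum_mul]
  exact sum_comm

lemma iidExpect_prod (g : Fin k → Fin (D + 1) → ℝ) :
    iidExpect p (fun f => ∏ j, g j (f j)) = ∏ j, ∑ x, g j x * p x := by
  simp only [iidExpect, ← prod_mul_distrib, Fintype.prod_sum]

variable {p}

lemma iidExpect_prod_pow (hsum : ∑ i, p i = 1) (s : Finset (Fin k)) (n : Fin k → ℕ) :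
    iidExpect p (fun f => ∏ j ∈ s, ((f j : ℕ) : ℝ) ^ n j) = ∏ j ∈ s, moment p (n j) := by
  have hfactor (j : Fin k) :
      ∑ x : Fin (D + 1), (if j ∈ s then ((x : ℕ) : ℝ) ^ n j else 1) * p x
        = if j ∈ s then moment p (n j) else 1 := by
    split_ifs <;> simp [moment, hsum]
  rw [← Fintype.prod_ite_mem s (fun j => moment p (n j))]
  simp_rw [← hfactor, ← iidExpect_prod, ← Fintype.prod_ite_mem s]

lemma iidExpect_pow (hsum : ∑ i, p i = 1) (a : Fin k) (n : ℕ) :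
    iidExpect p (fun f => ((f a : ℕ) : ℝ) ^ n) = moment p n := by
  simpa using iidExpect_prod_pow hsum {a} (fun _ => n)

lemma iidExpect_sq_mul (hsum : ∑ i, p i = 1) (hmean : moment p 1 = 1) {a c : Fin k}
    (hac : a ≠ c) :
    iidExpect p (fun f => ((f a : ℕ) : ℝ) ^ 2 * ((f c : ℕ) : ℝ)) = moment p 2 := by
  simpa [prod_pair hac, hac.symm, hmean] using
    iidExpect_prod_pow hsum {a, c} (fun j => if j = a then 2 else 1)

lemma iidExpect_mul_mul_of_pairwise_ne (hsum : ∑ i, p i = 1) (hmean : moment p 1 = 1)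
    {a b c : Fin k} (hab : a ≠ b) (hac : a ≠ c) (hbc : b ≠ c) :
    iidExpect p (fun f => ((f a : ℕ) : ℝ) * ((f b : ℕ) : ℝ) * ((f c : ℕ) : ℝ)) = 1 := by
  simpa [hab, hac, hbc, hmean, mul_assoc] using iidExpect_prod_pow hsum {a, b, c} (fun _ => 1)

-- The pair term counts a triple coincidence three times, whence the coefficient `B₃ - 3B₂ + 2`.
lemma iidExpect_mul_mul (hsum : ∑ i, p i = 1) (hmean : moment p 1 = 1) (a b c : Fin k) :
    iidExpect p (fun f => ((f a : ℕ) : ℝ) * ((f b : ℕ) : ℝ) * ((f c : ℕ) : ℝ))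
      = 1 + (moment p 2 - 1) * ((if a = b then 1 else 0) + (if a = c then 1 else 0) +
            (if b = c then 1 else 0))
        + (moment p 3 - 3 * moment p 2 + 2) *
            ((if a = b then 1 else 0) * (if a = c then 1 else 0)) := by
  rcases eq_or_ne a b with rfl | hab <;> rcases eq_or_ne a c with rfl | hac
  · calc _ = iidExpect p (fun f => ((f a : ℕ) : ℝ) ^ 3) := by congr 1; funext f; ring
      _ = _ := by rw [iidExpect_pow hsum]; simp; ring
  · calc _ = iidExpect p (fun f => ((f a : ℕ) : ℝ) ^ 2 * ((f c : ℕ) : ℝ)) := by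
          congr 1; funext f; ring
      _ = _ := by rw [iidExpect_sq_mul hsum hmean hac]; simp [hac]
  · calc _ = iidExpect p (fun f => ((f a : ℕ) : ℝ) ^ 2 * ((f b : ℕ) : ℝ)) := by
          congr 1; funext f; ring
      _ = _ := by rw [iidExpect_sq_mul hsum hmean hab]; simp [hab, hab.symm]
  rcases eq_or_ne b c with rfl | hbc
  · calc _ = iidExpect p (fun f => ((f b : ℕ) : ℝ) ^ 2 * ((f a : ℕ) : ℝ)) := by
          congr 1; funext f; ring
      _ = _ := by rw [iidExpect_sq_mul hsum hmean hab.symm]; simp [hab]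
  · rw [iidExpect_mul_mul_of_pairwise_ne hsum hmean hab hac hbc]; simp [hab, hac, hbc]

lemma iidExpect_sum_mul_sum_mul_sum (hsum : ∑ i, p i = 1) (hmean : moment p 1 = 1)
    (U V W : Finset (Fin k)) :
    iidExpect p (fun f => (∑ a ∈ U, ((f a : ℕ) : ℝ)) * (∑ b ∈ V, ((f b : ℕ) : ℝ)) *
        ∑ c ∈ W, ((f c : ℕ) : ℝ))
      = #U * #V * #W + (moment p 2 - 1) * (#(U ∩ V) * #W + #(U ∩ W) * #V + #(V ∩ W) * #U)
        + (moment p 3 - 3 * moment p 2 + 2) * #(U ∩ V ∩ W) := by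
  have hexpand : (fun f : Fin k → Fin (D + 1) => (∑ a ∈ U, ((f a : ℕ) : ℝ)) *
      (∑ b ∈ V, ((f b : ℕ) : ℝ)) * ∑ c ∈ W, ((f c : ℕ) : ℝ))
      = fun f => ∑ a ∈ U, ∑ b ∈ V, ∑ c ∈ W,
          ((f a : ℕ) : ℝ) * ((f b : ℕ) : ℝ) * ((f c : ℕ) : ℝ) := by
    funext f
    rw [sum_mul_sum, sum_mul]
    refine sum_congr rfl fun a _ => ?_
    rw [sum_mul]
    exact sum_congr rfl fun b _ => mul_sum _ _ _
  rw [hexpand]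
  simp only [iidExpect_sum, iidExpect_mul_mul hsum hmean]
  simp only [mul_ite, mul_one, mul_zero, sum_add_distrib, sum_const, nsmul_eq_mul, ← mul_sum,
    sum_ite_irrel, sum_ite_eq, sum_ite_mem, inter_assoc]
  rw [inter_comm W V]
  ring

end IidOffspring

lemma card_filter_val_lt_of_le {k l : ℕ} (h : l ≤ k) : #{j : Fin k | (j : ℕ) < l} = l := by
  rw [Fin.card_filter_val_lt, min_eq_right h]

theorem stmt_19_general (D : ℕ) (p : Fin (D + 1) → ℝ)
    (hsum : ∑ i, p i = 1) (hmean : ∑ i, (i.1 : ℝ) * p i = 1)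
    (k l₁ l₂ : ℕ) (h12 : l₁ ≤ l₂) (h2k : l₂ ≤ k) :
    (1 / (k : ℝ)) * (∑ f : Fin k → Fin (D + 1),
        subOff l₁ f * subOff l₂ f * totOff f * ∏ j, p (f j)) =
      (1 / (k : ℝ)) * ((l₁ : ℝ) * (∑ i, (i.1 : ℝ) ^ 3 * p i) +
        ((l₁ : ℝ) * ((k : ℝ) - 1) + 2 * (l₁ : ℝ) * ((l₂ : ℝ) - 1)) *
          (∑ i, (i.1 : ℝ) ^ 2 * p i) +
        (l₁ : ℝ) * ((l₂ : ℝ) - 1) * ((k : ℝ) - 2)) := by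
  have hmoment_one : moment p 1 = 1 := by simpa [moment] using hmean
  have hsub : univ.filter (fun j : Fin k => (j : ℕ) < l₁) ⊆
      univ.filter (fun j : Fin k => (j : ℕ) < l₂) :=
    monotone_filter_right univ fun _ _ => h12.trans_lt'
  have hexpect :
      iidExpect p (fun f : Fin k → Fin (D + 1) => subOff l₁ f * subOff l₂ f * totOff f) = _ :=
    iidExpect_sum_mul_sum_mul_sum hsum hmoment_one (univ.filter fun j : Fin k => (j : ℕ) < l₁)
      (univ.filter fun j : Fin k => (j : ℕ) < l₂) univ
  rw [inter_eq_left.2 hsub, inter_univ, inter_univ, card_filter_val_lt_of_le (h12.trans h2k),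
    card_filter_val_lt_of_le h2k, card_univ, Fintype.card_fin] at hexpect
  rw [iidExpect] at hexpect
  rw [hexpect, moment, moment]
  ring

/-- quadratic covariation identity for two nested subpopulations of sizes
`l₁ ≤ l₂ ≤ k`:
`E[V⁽¹⁾_{m+1} V⁽²⁾_{m+1} | ·] = (1/k)(l₁B₃ + (l₁(k−1) + 2l₁(l₂−1))B₂ + l₁(l₂−1)(k−2))`. -/
theorem stmt_19 (D : ℕ) (p : Fin (D + 1) → ℝ) (hp : ∀ i, 0 ≤ p i)
    (hsum : ∑ i, p i = 1) (hmean : ∑ i, (i.1 : ℝ) * p i = 1)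
    (k l₁ l₂ : ℕ) (hk : 0 < k) (h12 : l₁ ≤ l₂) (h2k : l₂ ≤ k) :
    (1 / (k : ℝ)) * (∑ f : Fin k → Fin (D + 1),
        subOff l₁ f * subOff l₂ f * totOff f * ∏ j, p (f j)) =
      (1 / (k : ℝ)) * ((l₁ : ℝ) * (∑ i, (i.1 : ℝ) ^ 3 * p i) +
        ((l₁ : ℝ) * ((k : ℝ) - 1) + 2 * (l₁ : ℝ) * ((l₂ : ℝ) - 1)) *
          (∑ i, (i.1 : ℝ) ^ 2 * p i) +
        (l₁ : ℝ) * ((l₂ : ℝ) - 1) * ((k : ℝ) - 2)) :=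
  stmt_19_general D p hsum hmean k l₁ l₂ h12 h2k
end
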